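/- arXiv:2605.17383 — 7 statements merged into one kernel-verified Lean document; each statement's English description precedes it below -/
import Mathlib

section
/- Let G be a strongly C4-free graph and C a set-join cover of G. If {v1} ∨ K ∈ C with |K| ≥ 2, then {v1} ∨ K is the only element of C having K as a component (i.e., no other set-join in C uses K as one of its two parts). -/
structure LoopGraph (V : Type*) where
  Adj : V → V → Prop
  symm : ∀ u v, Adj u v → Adj v u

namespace LoopGraph

variable {V : Type*} [Fintype V] [DecidableEq V]

/-- `C` is a set-join cover of `G`: a finite family of set-joins `K ∨ L`
(with `K`, `L` nonempty) whose edge sets union to `E(G)`. -/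
def IsCover (G : LoopGraph V) (C : Finset (Finset V × Finset V)) : Prop :=
  (∀ p ∈ C, p.1.Nonempty ∧ p.2.Nonempty) ∧
  (∀ u v : V, G.Adj u v ↔ ∃ p ∈ C, (u ∈ p.1 ∧ v ∈ p.2) ∨ (u ∈ p.2 ∧ v ∈ p.1))

/-- The component set of a set-join cover: all sets occurring as a part. -/
def sjComponents (C : Finset (Finset V × Finset V)) : Finset (Finset V) :=
  C.image Prod.fst ∪ C.image Prod.snd

/-- The SNT-rank: minimal number of distinct components over all set-join covers. -/
noncomputable def stp (G : LoopGraph V) : ℕ :=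
  sInf {n | ∃ C : Finset (Finset V × Finset V), G.IsCover C ∧ (sjComponents C).card = n}

/-- `gap G = |V(G)| - stp G`. -/
noncomputable def gap (G : LoopGraph V) : ℕ :=
  Fintype.card V - G.stp

/-- No vertices `u₁ ≠ u₂`, `v₁ ≠ v₂` with all four pairs `{uᵢ, vⱼ}` edges. -/
def StronglyC4Free (G : LoopGraph V) : Prop :=
  ¬ ∃ u₁ u₂ v₁ v₂ : V, u₁ ≠ u₂ ∧ v₁ ≠ v₂ ∧
    G.Adj u₁ v₁ ∧ G.Adj u₁ v₂ ∧ G.Adj u₂ v₁ ∧ G.Adj u₂ v₂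

/-- Induced subgraph on a finset of vertices. -/
def induce (G : LoopGraph V) (s : Finset V) : LoopGraph {x // x ∈ s} :=
  ⟨fun a b => G.Adj a b, fun _ _ h => G.symm _ _ h⟩

/-- Degree of a vertex; a loop counts twice. -/
noncomputable def deg (G : LoopGraph V) (x : V) : ℕ :=
  {y | G.Adj x y}.ncard + {y | y = x ∧ G.Adj x y}.ncard

end LoopGraph

open LoopGraph

/-- If `{v₁} ∨ K ∈ C` with `|K| ≥ 2`, then it is the only element
of the cover `C` having `K` as a component. -/
theorem stmt_1 {V : Type*} [Fintype V] [DecidableEq V] (G : LoopGraph V)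
    (hG : G.StronglyC4Free)
    (C : Finset (Finset V × Finset V)) (hC : G.IsCover C)
    (v₁ : V) (K : Finset V) (hK : 2 ≤ K.card)
    (hmem : (({v₁} : Finset V), K) ∈ C ∨ (K, ({v₁} : Finset V)) ∈ C) :
    ∀ p ∈ C, (p.1 = K ∨ p.2 = K) →
      p = (({v₁} : Finset V), K) ∨ p = (K, ({v₁} : Finset V)) := by
  obtain ⟨hne, hadj⟩ := hC
  have hkv : ∀ k ∈ K, G.Adj k v₁ := by
    intro k hk
    rcases hmem with h | h
    · exact (hadj k v₁).2 ⟨_, h, Or.inr ⟨hk, Finset.mem_singleton_self v₁⟩⟩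
    · exact (hadj k v₁).2 ⟨_, h, Or.inl ⟨hk, Finset.mem_singleton_self v₁⟩⟩
  obtain ⟨k₁, hk₁, k₂, hk₂, hkk⟩ := Finset.one_lt_card.mp hK
  have key : ∀ L : Finset V, ((K, L) ∈ C ∨ (L, K) ∈ C) → L.Nonempty → L = {v₁} := by
    intro L hL hLne
    refine Finset.eq_singleton_iff_nonempty_unique_mem.mpr ⟨hLne, ?_⟩
    intro w hw
    by_contra hwv
    have hkw : ∀ k ∈ K, G.Adj k w := by
      intro k hk
      rcases hL with h | h
      · exact (hadj k w).2 ⟨_, h, Or.inl ⟨hk, hw⟩⟩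
      · exact (hadj k w).2 ⟨_, h, Or.inr ⟨hk, hw⟩⟩
    exact hG ⟨k₁, k₂, v₁, w, hkk, fun h => hwv h.symm, hkv k₁ hk₁,
      hkw k₁ hk₁, hkv k₂ hk₂, hkw k₂ hk₂⟩
  rintro ⟨A, B⟩ hp hpK
  rcases hpK with h1 | h2
  · simp only at h1
    subst h1
    have hB := key B (Or.inl hp) (hne _ hp).2
    exact Or.inr (by rw [hB])
  · simp only at h2
    subst h2
    have hA := key A (Or.inr hp) (hne _ hp).1
    exact Or.inl (by rw [hA])
end

section
/- Let G be a strongly C4-free graph and C an optimal set-join cover of G (i.e., one minimizing the total number of distinct components used). Then any two components of C intersect in at most one vertex. -/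
open LoopGraph

/-- In an optimal set-join cover of a strongly C4-free graph,
any two components intersect in at most one vertex. -/
theorem stmt_2 {V : Type*} [Fintype V] [DecidableEq V] (G : LoopGraph V)
    (hG : G.StronglyC4Free)
    (C : Finset (Finset V × Finset V)) (hC : G.IsCover C)
    (hopt : (sjComponents C).card = G.stp) :
    ∀ K ∈ sjComponents C, ∀ L ∈ sjComponents C, K ≠ L → (K ∩ L).card ≤ 1 := by
  classical
  intro K hK L hL hKL
  by_contra hcard
  push_neg at hcard
  obtain ⟨u₁, hu₁, u₂, hu₂, hne⟩ := Finset.one_lt_card.mp hcard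
  have hu₁K : u₁ ∈ K := (Finset.mem_inter.mp hu₁).1
  have hu₁L : u₁ ∈ L := (Finset.mem_inter.mp hu₁).2
  have hu₂K : u₂ ∈ K := (Finset.mem_inter.mp hu₂).1
  have hu₂L : u₂ ∈ L := (Finset.mem_inter.mp hu₂).2
  have adj12 : ∀ p ∈ C, ∀ a ∈ p.1, ∀ b ∈ p.2, G.Adj a b := fun p hp a ha b hb =>
    (hC.2 a b).2 ⟨p, hp, Or.inl ⟨ha, hb⟩⟩
  have adj21 : ∀ p ∈ C, ∀ a ∈ p.2, ∀ b ∈ p.1, G.Adj a b := fun p hp a ha b hb =>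
    (hC.2 a b).2 ⟨p, hp, Or.inr ⟨ha, hb⟩⟩
  have hN : ∀ m m', G.Adj u₁ m → G.Adj u₂ m → G.Adj u₁ m' → G.Adj u₂ m' → m = m' := by
    intro m m' h1 h2 h3 h4
    by_contra h
    exact hG ⟨u₁, u₂, m, m', hne, h, h1, h3, h2, h4⟩
  have exSide : ∀ S : Finset V, S ∈ sjComponents C → ∃ p ∈ C, p.1 = S ∨ p.2 = S := by
    intro S hS
    rcases Finset.mem_union.mp hS with h | h <;>
    · obtain ⟨p, hp, hpe⟩ := Finset.mem_image.mp h
      exact ⟨p, hp, by tauto⟩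
  have sideN : ∀ p ∈ C, ∀ S : Finset V, u₁ ∈ S → u₂ ∈ S →
      (p.1 = S → ∀ m ∈ p.2, G.Adj u₁ m ∧ G.Adj u₂ m) ∧
      (p.2 = S → ∀ m ∈ p.1, G.Adj u₁ m ∧ G.Adj u₂ m) := by
    intro p hp S h1 h2
    constructor
    · rintro rfl m hm
      exact ⟨adj12 p hp u₁ h1 m hm, adj12 p hp u₂ h2 m hm⟩
    · rintro rfl m hm
      exact ⟨adj21 p hp u₁ h1 m hm, adj21 p hp u₂ h2 m hm⟩
  obtain ⟨p₀, hp₀, hp₀K⟩ := exSide K hK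
  have hvex : ∃ v, G.Adj u₁ v ∧ G.Adj u₂ v := by
    rcases hp₀K with h | h
    · obtain ⟨m, hm⟩ := (hC.1 p₀ hp₀).2
      exact ⟨m, (sideN p₀ hp₀ K hu₁K hu₂K).1 h m hm⟩
    · obtain ⟨m, hm⟩ := (hC.1 p₀ hp₀).1
      exact ⟨m, (sideN p₀ hp₀ K hu₁K hu₂K).2 h m hm⟩
  obtain ⟨v, hv1, hv2⟩ := hvex
  have classify : ∀ p ∈ C,
      (p.1 = K → p.2 = {v}) ∧ (p.2 = K → p.1 = {v}) ∧
      (p.1 = L → p.2 = {v}) ∧ (p.2 = L → p.1 = {v}) := by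
    intro p hp
    have sing : ∀ M : Finset V, M.Nonempty →
        (∀ m ∈ M, G.Adj u₁ m ∧ G.Adj u₂ m) → M = {v} := by
      intro M hMne hM
      obtain ⟨m, hm⟩ := hMne
      have hmv : m = v := hN m v (hM m hm).1 (hM m hm).2 hv1 hv2
      exact Finset.eq_singleton_iff_unique_mem.mpr
        ⟨hmv ▸ hm, fun b hb => hN b v (hM b hb).1 (hM b hb).2 hv1 hv2⟩
    exact ⟨fun h => sing _ ((hC.1 p hp).2) ((sideN p hp K hu₁K hu₂K).1 h),
           fun h => sing _ ((hC.1 p hp).1) ((sideN p hp K hu₁K hu₂K).2 h),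
           fun h => sing _ ((hC.1 p hp).2) ((sideN p hp L hu₁L hu₂L).1 h),
           fun h => sing _ ((hC.1 p hp).1) ((sideN p hp L hu₁L hu₂L).2 h)⟩
  -- adjacency of every element of K (resp. L) with v
  have adjKv : ∀ a ∈ K, G.Adj a v := by
    intro a ha
    rcases hp₀K with h | h
    · have h2 := (classify p₀ hp₀).1 h
      exact adj12 p₀ hp₀ a (by rw [h]; exact ha) v (by rw [h2]; exact Finset.mem_singleton_self v)
    · have h2 := (classify p₀ hp₀).2.1 h
      exact adj21 p₀ hp₀ a (by rw [h]; exact ha) v (by rw [h2]; exact Finset.mem_singleton_self v)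
  obtain ⟨q₀, hq₀, hq₀L⟩ := exSide L hL
  have adjLv : ∀ a ∈ L, G.Adj a v := by
    intro a ha
    rcases hq₀L with h | h
    · have h2 := (classify q₀ hq₀).2.2.1 h
      exact adj12 q₀ hq₀ a (by rw [h]; exact ha) v (by rw [h2]; exact Finset.mem_singleton_self v)
    · have h2 := (classify q₀ hq₀).2.2.2 h
      exact adj21 q₀ hq₀ a (by rw [h]; exact ha) v (by rw [h2]; exact Finset.mem_singleton_self v)
  -- the singleton {v} is a component of C
  have hvC : ({v} : Finset V) ∈ sjComponents C := by
    rcases hp₀K with h | h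
    · have h2 := (classify p₀ hp₀).1 h
      exact Finset.mem_union_right _ (Finset.mem_image.mpr ⟨p₀, hp₀, h2⟩)
    · have h2 := (classify p₀ hp₀).2.1 h
      exact Finset.mem_union_left _ (Finset.mem_image.mpr ⟨p₀, hp₀, h2⟩)
  have hK2 : 1 < K.card := lt_of_lt_of_le hcard (Finset.card_le_card Finset.inter_subset_left)
  have hL2 : 1 < L.card := lt_of_lt_of_le hcard (Finset.card_le_card Finset.inter_subset_right)
  have hvK : ({v} : Finset V) ≠ K := by
    intro h; rw [← h] at hK2; simp at hK2
  have hvL : ({v} : Finset V) ≠ L := by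
    intro h; rw [← h] at hL2; simp at hL2
  -- the new cover
  set C' : Finset (Finset V × Finset V) :=
    (C.filter (fun p => p.1 ≠ K ∧ p.2 ≠ K ∧ p.1 ≠ L ∧ p.2 ≠ L)) ∪
      {((K ∪ L : Finset V), ({v} : Finset V))} with hC'def
  have hcov : G.IsCover C' := by
    constructor
    · intro p hp
      rcases Finset.mem_union.mp hp with h | h
      · exact hC.1 p (Finset.mem_filter.mp h).1
      · rw [Finset.mem_singleton.mp h]
        exact ⟨⟨u₁, Finset.mem_union_left _ hu₁K⟩, ⟨v, Finset.mem_singleton_self v⟩⟩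
    · intro a b
      constructor
      · intro hab
        obtain ⟨p, hp, hcond⟩ := (hC.2 a b).1 hab
        by_cases hP : p.1 ≠ K ∧ p.2 ≠ K ∧ p.1 ≠ L ∧ p.2 ≠ L
        · exact ⟨p, Finset.mem_union_left _ (Finset.mem_filter.mpr ⟨hp, hP⟩), hcond⟩
        · refine ⟨((K ∪ L : Finset V), ({v} : Finset V)),
            Finset.mem_union_right _ (Finset.mem_singleton_self _), ?_⟩
          have hcases : p.1 = K ∨ p.2 = K ∨ p.1 = L ∨ p.2 = L := by tauto
          obtain ⟨h1, h2, h3, h4⟩ := classify p hp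
          rcases hcases with h | h | h | h
          · rw [h, h1 h] at hcond
            rcases hcond with ⟨ha, hb⟩ | ⟨ha, hb⟩
            · exact Or.inl ⟨Finset.mem_union_left _ ha, hb⟩
            · exact Or.inr ⟨ha, Finset.mem_union_left _ hb⟩
          · rw [h, h2 h] at hcond
            rcases hcond with ⟨ha, hb⟩ | ⟨ha, hb⟩
            · exact Or.inr ⟨ha, Finset.mem_union_left _ hb⟩
            · exact Or.inl ⟨Finset.mem_union_left _ ha, hb⟩
          · rw [h, h3 h] at hcond
            rcases hcond with ⟨ha, hb⟩ | ⟨ha, hb⟩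
            · exact Or.inl ⟨Finset.mem_union_right _ ha, hb⟩
            · exact Or.inr ⟨ha, Finset.mem_union_right _ hb⟩
          · rw [h, h4 h] at hcond
            rcases hcond with ⟨ha, hb⟩ | ⟨ha, hb⟩
            · exact Or.inr ⟨ha, Finset.mem_union_right _ hb⟩
            · exact Or.inl ⟨Finset.mem_union_right _ ha, hb⟩
      · rintro ⟨p, hp, hcond⟩
        rcases Finset.mem_union.mp hp with h | h
        · exact (hC.2 a b).2 ⟨p, (Finset.mem_filter.mp h).1, hcond⟩
        · rw [Finset.mem_singleton.mp h] at hcond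
          rcases hcond with ⟨ha, hb⟩ | ⟨ha, hb⟩
          · have hb' : b = v := Finset.mem_singleton.mp hb
            subst hb'
            rcases Finset.mem_union.mp ha with h' | h'
            · exact adjKv a h'
            · exact adjLv a h'
          · have ha' : a = v := Finset.mem_singleton.mp ha
            subst ha'
            rcases Finset.mem_union.mp hb with h' | h'
            · exact G.symm _ _ (adjKv b h')
            · exact G.symm _ _ (adjLv b h')
  -- components of C' are few
  have hsub : sjComponents C' ⊆ insert (K ∪ L) (((sjComponents C).erase K).erase L) := by
    intro S hS
    have main : ∀ p ∈ C', (p.1 = S ∨ p.2 = S) →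
        S ∈ insert (K ∪ L) (((sjComponents C).erase K).erase L) := by
      intro p hp he
      rcases Finset.mem_union.mp hp with h | h
      · obtain ⟨hpC, hP⟩ := Finset.mem_filter.mp h
        have hSC : S ∈ sjComponents C := by
          rcases he with he | he
          · exact Finset.mem_union_left _ (Finset.mem_image.mpr ⟨p, hpC, he⟩)
          · exact Finset.mem_union_right _ (Finset.mem_image.mpr ⟨p, hpC, he⟩)
        have hSK : S ≠ K := by rcases he with he | he <;> (subst he; tauto)
        have hSL : S ≠ L := by rcases he with he | he <;> (subst he; tauto)
        exact Finset.mem_insert_of_mem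
          (Finset.mem_erase.mpr ⟨hSL, Finset.mem_erase.mpr ⟨hSK, hSC⟩⟩)
      · rw [Finset.mem_singleton.mp h] at he
        rcases he with he | he
        · exact he ▸ Finset.mem_insert_self _ _
        · refine Finset.mem_insert_of_mem (Finset.mem_erase.mpr ⟨?_, Finset.mem_erase.mpr ⟨?_, ?_⟩⟩)
          · exact he ▸ hvL
          · exact he ▸ hvK
          · exact he ▸ hvC
    rcases Finset.mem_union.mp hS with h | h <;>
    · obtain ⟨p, hp, hpe⟩ := Finset.mem_image.mp h
      exact main p hp (by tauto)
  have hn2 : 1 < (sjComponents C).card := Finset.one_lt_card.mpr ⟨K, hK, L, hL, hKL⟩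
  have hcard' : (sjComponents C').card < (sjComponents C).card := by
    have h1 : (sjComponents C').card ≤
        (insert (K ∪ L) (((sjComponents C).erase K).erase L)).card :=
      Finset.card_le_card hsub
    have h2 : (insert (K ∪ L) (((sjComponents C).erase K).erase L)).card ≤
        (((sjComponents C).erase K).erase L).card + 1 := Finset.card_insert_le _ _
    have h3 : (((sjComponents C).erase K).erase L).card ≤ (sjComponents C).card - 2 := by
      have hLe : L ∈ (sjComponents C).erase K := Finset.mem_erase.mpr ⟨hKL.symm, hL⟩
      rw [Finset.card_erase_of_mem hLe, Finset.card_erase_of_mem hK]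
      omega
    omega
  have hle : G.stp ≤ (sjComponents C').card :=
    Nat.sInf_le ⟨C', hcov, rfl⟩
  omega
end

section
/- Let G be a simple graph, v ∈ V(G) a vertex of degree 1 (a leaf) and w its unique neighbour. Let H be the graph obtained from G by deleting both v and w. Then gap(G) = gap(H), i.e., stp(G) = stp(H) + 2. -/
open LoopGraph

/-! In a set-join cover of `G`, every set-join with the leaf `v` on one side has exactly `{w}`
on the other, as `w` is the only neighbour of `v`. Hence an optimal cover of `G` has `{w}` and
some component containing `v` among its components. Restricting all set-joins to
`V ∖ {v, w}` and dropping those with an empty side yields a cover of `H` that loses both of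
them, so `stp H + 2 ≤ stp G`. Conversely, an optimal cover of `H` together with the star
`{w} ∨ N(w)` covers `G` with at most two more components. -/

namespace LoopGraph

variable {V W : Type*}

def Joined (C : Finset (Finset V × Finset V)) (u v : V) : Prop :=
  ∃ p ∈ C, (u ∈ p.1 ∧ v ∈ p.2) ∨ (u ∈ p.2 ∧ v ∈ p.1)

lemma IsCover.adj_iff {G : LoopGraph V} {C : Finset (Finset V × Finset V)} (hC : G.IsCover C)
    (u v : V) : G.Adj u v ↔ Joined C u v :=
  hC.2 u v

lemma joined_singleton {K L : Finset V} {u v : V} :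
    Joined {(K, L)} u v ↔ (u ∈ K ∧ v ∈ L) ∨ (u ∈ L ∧ v ∈ K) := by
  simp [Joined]

lemma mem_sjComponents [DecidableEq V] {C : Finset (Finset V × Finset V)} {K : Finset V} :
    K ∈ sjComponents C ↔ ∃ L, (K, L) ∈ C ∨ (L, K) ∈ C := by
  simp [sjComponents, exists_or]

lemma IsCover.eq_singleton_of_leaf {G : LoopGraph V} {C : Finset (Finset V × Finset V)}
    (hC : G.IsCover C) {v w : V} (huniq : ∀ x, G.Adj v x → x = w) {K L : Finset V}
    (hKL : (K, L) ∈ C ∨ (L, K) ∈ C) (hvK : v ∈ K) : L = {w} := by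
  have hL : L.Nonempty := by
    rcases hKL with h | h
    exacts [(hC.1 _ h).2, (hC.1 _ h).1]
  refine hL.subset_singleton_iff.mp fun x hx =>
    Finset.mem_singleton.mpr (huniq x ((hC.adj_iff v x).mpr ?_))
  rcases hKL with h | h
  exacts [⟨_, h, Or.inl ⟨hvK, hx⟩⟩, ⟨_, h, Or.inr ⟨hvK, hx⟩⟩]

variable [DecidableEq V]

lemma joined_union {C D : Finset (Finset V × Finset V)} {u v : V} :
    Joined (C ∪ D) u v ↔ Joined C u v ∨ Joined D u v := by
  simp only [Joined, Finset.mem_union, or_and_right, exists_or]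

lemma joined_image_map {C : Finset (Finset W × Finset W)} (e : W ↪ V) {u v : V} :
    Joined (C.image (Prod.map (Finset.map e) (Finset.map e))) u v ↔
      ∃ a b, e a = u ∧ e b = v ∧ Joined C a b := by
  simp only [Joined, Finset.mem_image, Prod.exists, Prod.map]
  aesop

def restrictCover (s : Finset V) (C : Finset (Finset V × Finset V)) :
    Finset (Finset s × Finset s) :=
  (C.filter fun p => (p.1.subtype (· ∈ s)).Nonempty ∧ (p.2.subtype (· ∈ s)).Nonempty).image
    (Prod.map (Finset.subtype (· ∈ s)) (Finset.subtype (· ∈ s)))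

lemma joined_restrictCover {s : Finset V} {C : Finset (Finset V × Finset V)} {a b : s} :
    Joined (restrictCover s C) a b ↔ Joined C a b := by
  constructor
  · rintro ⟨_, hp, hab⟩
    obtain ⟨p, hpC, rfl⟩ := Finset.mem_image.mp hp
    exact ⟨p, (Finset.mem_filter.mp hpC).1, by simpa using hab⟩
  · rintro ⟨p, hp, hab⟩
    refine ⟨Prod.map (Finset.subtype (· ∈ s)) (Finset.subtype (· ∈ s)) p,
      Finset.mem_image_of_mem _ (Finset.mem_filter.mpr ⟨hp, ?_⟩), by simpa using hab⟩
    rcases hab with ⟨ha, hb⟩ | ⟨ha, hb⟩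
    · exact ⟨⟨a, by simpa using ha⟩, ⟨b, by simpa using hb⟩⟩
    · exact ⟨⟨b, by simpa using hb⟩, ⟨a, by simpa using ha⟩⟩

lemma IsCover.restrictCover {G : LoopGraph V} {C : Finset (Finset V × Finset V)}
    (hC : G.IsCover C) (s : Finset V) : (G.induce s).IsCover (restrictCover s C) := by
  refine ⟨?_, fun a b => (hC.adj_iff a b).trans joined_restrictCover.symm⟩
  intro p hp
  obtain ⟨q, hq, rfl⟩ := Finset.mem_image.mp hp
  exact (Finset.mem_filter.mp hq).2

lemma sjComponents_union (C D : Finset (Finset V × Finset V)) :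
    sjComponents (C ∪ D) = sjComponents C ∪ sjComponents D := by
  ext K; simp only [mem_sjComponents, Finset.mem_union]; aesop

lemma sjComponents_singleton (K L : Finset V) : sjComponents {(K, L)} = {K, L} := by
  simp [sjComponents]

lemma sjComponents_image_prodMap [DecidableEq W] (C : Finset (Finset W × Finset W))
    (f : Finset W → Finset V) :
    sjComponents (C.image (Prod.map f f)) = (sjComponents C).image f := by
  simp only [sjComponents, Finset.image_union, Finset.image_image]
  rfl

lemma sjComponents_mono {C D : Finset (Finset V × Finset V)} (h : C ⊆ D) :
    sjComponents C ⊆ sjComponents D := by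
  intro K; simp only [mem_sjComponents]; aesop

lemma IsCover.exists_mem_sjComponents_of_leaf {G : LoopGraph V}
    {C : Finset (Finset V × Finset V)} (hC : G.IsCover C) {v w : V} (hadj : G.Adj v w)
    (huniq : ∀ x, G.Adj v x → x = w) :
    ∃ K ∈ sjComponents C, v ∈ K ∧ {w} ∈ sjComponents C := by
  obtain ⟨⟨K, L⟩, hp, ⟨hvK, -⟩ | ⟨hvK, -⟩⟩ := (hC.adj_iff v w).mp hadj
  · have hKL : (K, L) ∈ C ∨ (L, K) ∈ C := Or.inl hp
    refine ⟨K, mem_sjComponents.mpr ⟨L, hKL⟩, hvK, mem_sjComponents.mpr ⟨K, ?_⟩⟩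
    rw [← hC.eq_singleton_of_leaf huniq hKL hvK]
    exact Or.inr hp
  · have hLK : (L, K) ∈ C ∨ (K, L) ∈ C := Or.inr hp
    refine ⟨L, mem_sjComponents.mpr ⟨K, hLK⟩, hvK, mem_sjComponents.mpr ⟨L, ?_⟩⟩
    rw [← hC.eq_singleton_of_leaf huniq hLK hvK]
    exact Or.inl hp

lemma stp_le_card {G : LoopGraph V} {C : Finset (Finset V × Finset V)} (hC : G.IsCover C) :
    G.stp ≤ (sjComponents C).card :=
  Nat.sInf_le ⟨C, hC, rfl⟩

section stp

variable [Fintype V]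

lemma mem_compl_pair_or_eq_of_adj (G : LoopGraph V) {v w y z : V}
    (huniq : ∀ x, G.Adj v x → x = w) (hyz : G.Adj y z) :
    y ∈ ({v, w}ᶜ : Finset V) ∧ z ∈ ({v, w}ᶜ : Finset V) ∨ y = w ∨ z = w := by
  by_cases hy : y = w
  · exact Or.inr (Or.inl hy)
  by_cases hz : z = w
  · exact Or.inr (Or.inr hz)
  have hyv : y ≠ v := by rintro rfl; exact hz (huniq z hyz)
  have hzv : z ≠ v := by rintro rfl; exact hy (huniq y (G.symm _ _ hyz))
  exact Or.inl ⟨by simp [hy, hyv], by simp [hz, hzv]⟩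

lemma exists_isCover (G : LoopGraph V) : ∃ C, G.IsCover C := by
  classical
  refine ⟨(Finset.univ.filter fun p : V × V => G.Adj p.1 p.2).image fun p => ({p.1}, {p.2}),
    fun p hp => ?_, fun u v => ?_⟩
  · obtain ⟨q, -, rfl⟩ := Finset.mem_image.mp hp
    simp
  simp only [Finset.mem_image, Finset.mem_filter, Finset.mem_univ, true_and]
  constructor
  · intro h
    exact ⟨_, ⟨(u, v), h, rfl⟩,
      Or.inl ⟨Finset.mem_singleton_self u, Finset.mem_singleton_self v⟩⟩
  · rintro ⟨_, ⟨⟨x, y⟩, hxy, rfl⟩, ⟨hu, hv⟩ | ⟨hu, hv⟩⟩ <;>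
      simp only [Finset.mem_singleton] at hu hv <;> subst hu hv
    exacts [hxy, G.symm _ _ hxy]

lemma exists_isCover_card_eq_stp (G : LoopGraph V) :
    ∃ C, G.IsCover C ∧ (sjComponents C).card = G.stp := by
  obtain ⟨C, hC⟩ := G.exists_isCover
  exact Nat.sInf_mem (s := {n | ∃ C, G.IsCover C ∧ (sjComponents C).card = n})
    ⟨_, C, hC, rfl⟩

theorem stp_le_stp_induce_add_two (G : LoopGraph V) (s : Finset V) {w x : V} (hwx : G.Adj w x)
    (hedge : ∀ y z, G.Adj y z → y ∈ s ∧ z ∈ s ∨ y = w ∨ z = w) :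
    G.stp ≤ (G.induce s).stp + 2 := by
  classical
  obtain ⟨C, hC, hcard⟩ := (G.induce s).exists_isCover_card_eq_stp
  set N := Finset.univ.filter (G.Adj w)
  set e := Function.Embedding.subtype (· ∈ s)
  set C' := C.image (Prod.map (Finset.map e) (Finset.map e)) ∪ {({w}, N)}
  have hC' : G.IsCover C' := by
    refine ⟨fun p hp => ?_, fun y z => ?_⟩
    · rcases Finset.mem_union.mp hp with hp | hp
      · obtain ⟨q, hq, rfl⟩ := Finset.mem_image.mp hp
        exact ⟨(hC.1 q hq).1.map, (hC.1 q hq).2.map⟩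
      · rw [Finset.mem_singleton.mp hp]
        exact ⟨Finset.singleton_nonempty w, x, by simpa [N] using hwx⟩
    show G.Adj y z ↔ Joined C' y z
    rw [joined_union, joined_image_map, joined_singleton]
    constructor
    · intro h
      rcases hedge y z h with ⟨hy, hz⟩ | rfl | rfl
      · exact Or.inl ⟨⟨y, hy⟩, ⟨z, hz⟩, rfl, rfl, (hC.adj_iff _ _).mp h⟩
      · exact Or.inr (Or.inl ⟨Finset.mem_singleton_self y, by simpa [N] using h⟩)
      · exact Or.inr (Or.inr ⟨by simpa [N] using G.symm _ _ h, Finset.mem_singleton_self z⟩)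
    · rintro (⟨a, b, rfl, rfl, hab⟩ | ⟨hy, hz⟩ | ⟨hy, hz⟩)
      · exact (hC.adj_iff a b).mpr hab
      · rw [Finset.mem_singleton.mp hy]
        simpa [N] using hz
      · rw [Finset.mem_singleton.mp hz]
        exact G.symm _ _ (by simpa [N] using hy)
  calc G.stp ≤ (sjComponents C').card := stp_le_card hC'
    _ ≤ (sjComponents C).card + 2 := by
      rw [sjComponents_union, sjComponents_image_prodMap, sjComponents_singleton]
      exact (Finset.card_union_le _ _).trans (add_le_add Finset.card_image_le Finset.card_le_two)
    _ = (G.induce s).stp + 2 := by rw [hcard]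

theorem stp_induce_add_two_le_of_leaf (G : LoopGraph V) {v w : V} (hvw : v ≠ w)
    (hadj : G.Adj v w) (huniq : ∀ x, G.Adj v x → x = w) :
    (G.induce ({v, w}ᶜ : Finset V)).stp + 2 ≤ G.stp := by
  set s : Finset V := {v, w}ᶜ
  obtain ⟨C, hC, hcard⟩ := G.exists_isCover_card_eq_stp
  have hws : ¬(({w} : Finset V).subtype (· ∈ s)).Nonempty := by
    rintro ⟨x, hx⟩
    have hxs := x.2
    rw [Finset.mem_subtype, Finset.mem_singleton] at hx
    simp [s, hx] at hxs
  set F := C.filter fun p => (p.1.subtype (· ∈ s)).Nonempty ∧ (p.2.subtype (· ∈ s)).Nonempty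
  -- A component containing `v` is paired with `{w}`, which misses `s`.
  have hF : ∀ K ∈ sjComponents F, (K.subtype (· ∈ s)).Nonempty ∧ v ∉ K := by
    intro K hK
    obtain ⟨L, hKL⟩ := mem_sjComponents.mp hK
    have hmeet : (K.subtype (· ∈ s)).Nonempty ∧ (L.subtype (· ∈ s)).Nonempty := by
      rcases hKL with h | h
      · exact (Finset.mem_filter.mp h).2
      · exact (Finset.mem_filter.mp h).2.symm
    have hKL : (K, L) ∈ C ∨ (L, K) ∈ C :=
      hKL.imp (Finset.mem_filter.mp · |>.1) (Finset.mem_filter.mp · |>.1)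
    exact ⟨hmeet.1, fun hvK => hws (hC.eq_singleton_of_leaf huniq hKL hvK ▸ hmeet.2)⟩
  obtain ⟨K₀, hK₀, hvK₀, hw⟩ := hC.exists_mem_sjComponents_of_leaf hadj huniq
  have hcount : (sjComponents F).card + 2 ≤ (sjComponents C).card := by
    have hwK₀ : ({w} : Finset V) ≠ K₀ := by
      rintro rfl
      exact hvw (Finset.mem_singleton.mp hvK₀)
    have hwF : {w} ∉ sjComponents F := fun h => hws (hF _ h).1
    have hK₀F : K₀ ∉ sjComponents F := fun h => (hF _ h).2 hvK₀
    calc (sjComponents F).card + 2 = (insert {w} (insert K₀ (sjComponents F))).card := by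
          rw [Finset.card_insert_of_notMem (by simp [hwK₀, hwF]),
            Finset.card_insert_of_notMem hK₀F]
      _ ≤ (sjComponents C).card := Finset.card_le_card <| Finset.insert_subset hw <|
          Finset.insert_subset hK₀ (sjComponents_mono (Finset.filter_subset _ _))
  calc (G.induce s).stp + 2 ≤ (sjComponents (restrictCover s C)).card + 2 := by
        gcongr
        exact stp_le_card (hC.restrictCover s)
    _ ≤ (sjComponents F).card + 2 := by
        rw [restrictCover, sjComponents_image_prodMap]
        gcongr
        exact Finset.card_image_le
    _ ≤ G.stp := hcard ▸ hcount

end stp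

end LoopGraph

/-- If `v` is a leaf (degree 1) with unique neighbour `w`, and `H`
is obtained from `G` by deleting `v` and `w`, then `gap G = gap H`, i.e.
`stp G = stp H + 2`. -/
theorem stmt_3 {V : Type*} [Fintype V] [DecidableEq V] (G : LoopGraph V)
    (v w : V) (hvw : v ≠ w) (hadj : G.Adj v w)
    (huniq : ∀ x, G.Adj v x → x = w) :
    G.gap = (G.induce ({v, w}ᶜ : Finset V)).gap ∧
    G.stp = (G.induce ({v, w}ᶜ : Finset V)).stp + 2 := by
  have hstp : G.stp = (G.induce ({v, w}ᶜ : Finset V)).stp + 2 :=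
    le_antisymm
      (G.stp_le_stp_induce_add_two _ (G.symm _ _ hadj) fun _ _ =>
        G.mem_compl_pair_or_eq_of_adj huniq)
      (G.stp_induce_add_two_le_of_leaf hvw hadj huniq)
  have hcard : Fintype.card ({v, w}ᶜ : Finset V) = Fintype.card V - 2 := by
    rw [Fintype.card_coe, Finset.card_compl, Finset.card_pair hvw]
  refine ⟨?_, hstp⟩
  rw [gap, gap, hstp, hcard]
  omega
end

section
/- If u and u' are twin vertices of a simple graph G (i.e., N_G[u] = N_G[u'], where the closed-style neighbourhood N_G[v] = {w : {v,w} ∈ E(G)}), then gap(G) = gap(G \ {u}) + 1. -/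
open LoopGraph

section Aux

variable {V : Type*} [Fintype V] [DecidableEq V]

lemma sjComponents_image_map {A B : Type*} [DecidableEq A] [DecidableEq B]
    (C : Finset (Finset A × Finset A)) (f : Finset A → Finset B) :
    sjComponents (C.image (fun p => (f p.1, f p.2))) = (sjComponents C).image f := by
  ext K
  simp only [sjComponents, Finset.mem_union, Finset.mem_image]
  constructor
  · rintro (⟨p, ⟨q, hq, rfl⟩, rfl⟩ | ⟨p, ⟨q, hq, rfl⟩, rfl⟩)
    · exact ⟨q.1, Or.inl ⟨q, hq, rfl⟩, rfl⟩
    · exact ⟨q.2, Or.inr ⟨q, hq, rfl⟩, rfl⟩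
  · rintro ⟨K, (⟨q, hq, rfl⟩ | ⟨q, hq, rfl⟩), rfl⟩
    · exact Or.inl ⟨(f q.1, f q.2), ⟨q, hq, rfl⟩, rfl⟩
    · exact Or.inr ⟨(f q.1, f q.2), ⟨q, hq, rfl⟩, rfl⟩

/-- A cover with at most `|V|` components always exists (singleton cover). -/
lemma exists_cover (G : LoopGraph V) :
    ∃ C, G.IsCover C ∧ (sjComponents C).card ≤ Fintype.card V := by
  classical
  refine ⟨(Finset.univ.filter (fun p : V × V => G.Adj p.1 p.2)).image
      (fun p => (({p.1} : Finset V), ({p.2} : Finset V))), ⟨?_, ?_⟩, ?_⟩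
  · rintro p hp
    simp only [Finset.mem_image] at hp
    obtain ⟨q, _, rfl⟩ := hp
    exact ⟨Finset.singleton_nonempty _, Finset.singleton_nonempty _⟩
  · intro x y
    constructor
    · intro h
      refine ⟨({x}, {y}), ?_, Or.inl ⟨Finset.mem_singleton_self x, Finset.mem_singleton_self y⟩⟩
      have hxy : (x, y) ∈ Finset.univ.filter (fun p : V × V => G.Adj p.1 p.2) :=
        Finset.mem_filter.mpr ⟨Finset.mem_univ _, h⟩
      exact Finset.mem_image_of_mem _ hxy
    · rintro ⟨p, hp, h⟩
      simp only [Finset.mem_image, Finset.mem_filter] at hp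
      obtain ⟨q, ⟨_, hq⟩, rfl⟩ := hp
      simp only [Finset.mem_singleton] at h
      rcases h with ⟨rfl, rfl⟩ | ⟨rfl, rfl⟩
      · exact hq
      · exact G.symm _ _ hq
  · calc (sjComponents _).card ≤ (Finset.univ.image (fun x : V => ({x} : Finset V))).card := by
          apply Finset.card_le_card
          intro K hK
          simp only [sjComponents, Finset.mem_union, Finset.mem_image] at hK
          rcases hK with ⟨p, ⟨q, _, rfl⟩, rfl⟩ | ⟨p, ⟨q, _, rfl⟩, rfl⟩
          · exact Finset.mem_image_of_mem _ (Finset.mem_univ q.1)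
          · exact Finset.mem_image_of_mem _ (Finset.mem_univ q.2)
      _ ≤ Finset.univ.card := Finset.card_image_le
      _ = Fintype.card V := rfl

lemma stp_set_nonempty (G : LoopGraph V) :
    {n | ∃ C : Finset (Finset V × Finset V), G.IsCover C ∧ (sjComponents C).card = n}.Nonempty := by
  obtain ⟨C, hC, _⟩ := exists_cover G
  exact ⟨(sjComponents C).card, C, hC, rfl⟩

lemma stp_le_of_cover {G : LoopGraph V} {C : Finset (Finset V × Finset V)}
    (h : G.IsCover C) : G.stp ≤ (sjComponents C).card :=
  Nat.sInf_le ⟨C, h, rfl⟩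

lemma stp_le_card (G : LoopGraph V) : G.stp ≤ Fintype.card V := by
  obtain ⟨C, hC, hc⟩ := exists_cover G
  exact le_trans (stp_le_of_cover hC) hc

lemma exists_min_cover (G : LoopGraph V) :
    ∃ C : Finset (Finset V × Finset V), G.IsCover C ∧ (sjComponents C).card = G.stp :=
  Nat.sInf_mem (stp_set_nonempty G)

end Aux

section Twin

variable {V : Type*} [Fintype V] [DecidableEq V]
variable (G : LoopGraph V) (u u' : V)

/-- stp of induced subgraph ≤ stp G : replace `u` by `u'` in every component. -/
lemma stp_induce_le (hne : u ≠ u') (htwin : ∀ x, G.Adj u x ↔ G.Adj u' x) :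
    (G.induce ({u}ᶜ : Finset V)).stp ≤ G.stp := by
  classical
  obtain ⟨C, ⟨hCne, hCcov⟩, hCcard⟩ := exists_min_cover G
  set f : Finset V → Finset {x // x ∈ ({u}ᶜ : Finset V)} :=
    fun K => (if u ∈ K then insert u' K else K).subtype (fun x => x ∈ ({u}ᶜ : Finset V)) with hf
  have hu'mem : u' ∈ ({u}ᶜ : Finset V) := by simp [hne.symm]
  have hmemf : ∀ (K : Finset V) (x : {x // x ∈ ({u}ᶜ : Finset V)}),
      x ∈ f K ↔ ((x : V) = u' ∧ u ∈ K) ∨ (x : V) ∈ K := by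
    intro K x
    rw [hf]
    by_cases h : u ∈ K <;>
      simp only [h, if_true, if_false, Finset.mem_subtype, Finset.mem_insert] <;> tauto
  refine le_trans (stp_le_of_cover (C := C.image (fun p => (f p.1, f p.2))) ⟨?_, ?_⟩) ?_
  · rintro p hp
    simp only [Finset.mem_image] at hp
    obtain ⟨q, hq, rfl⟩ := hp
    obtain ⟨h1, h2⟩ := hCne q hq
    constructor
    · by_cases h : u ∈ q.1
      · exact ⟨⟨u', hu'mem⟩, (hmemf q.1 _).mpr (Or.inl ⟨rfl, h⟩)⟩
      · obtain ⟨x, hx⟩ := h1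
        have hxu : x ≠ u := fun e => h (e ▸ hx)
        exact ⟨⟨x, by simp [hxu]⟩, (hmemf q.1 _).mpr (Or.inr hx)⟩
    · by_cases h : u ∈ q.2
      · exact ⟨⟨u', hu'mem⟩, (hmemf q.2 _).mpr (Or.inl ⟨rfl, h⟩)⟩
      · obtain ⟨x, hx⟩ := h2
        have hxu : x ≠ u := fun e => h (e ▸ hx)
        exact ⟨⟨x, by simp [hxu]⟩, (hmemf q.2 _).mpr (Or.inr hx)⟩
  · intro x y
    constructor
    · intro hadj
      have hadj' : G.Adj (x : V) (y : V) := hadj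
      obtain ⟨p, hp, hor⟩ := (hCcov x y).mp hadj'
      refine ⟨(f p.1, f p.2), Finset.mem_image_of_mem _ hp, ?_⟩
      rcases hor with ⟨h1, h2⟩ | ⟨h1, h2⟩
      · exact Or.inl ⟨(hmemf p.1 x).mpr (Or.inr h1), (hmemf p.2 y).mpr (Or.inr h2)⟩
      · exact Or.inr ⟨(hmemf p.2 x).mpr (Or.inr h1), (hmemf p.1 y).mpr (Or.inr h2)⟩
    · rintro ⟨p, hp, hor⟩
      simp only [Finset.mem_image] at hp
      obtain ⟨q, hq, rfl⟩ := hp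
      -- key fact: membership in f K for (x:V) implies adjacency transfer
      have key : ∀ (K L : Finset V) (a b : {x // x ∈ ({u}ᶜ : Finset V)}),
          a ∈ f K → b ∈ f L →
          (∀ s t : V, s ∈ K → t ∈ L → G.Adj s t) → G.Adj (a : V) (b : V) := by
        intro K L a b ha hb hKL
        rcases (hmemf K a).mp ha with ⟨hau', haK⟩ | haK <;>
          rcases (hmemf L b).mp hb with ⟨hbu', hbL⟩ | hbL
        · -- a = u', b = u', u ∈ K, u ∈ L
          have h1 : G.Adj u u := hKL u u haK hbL
          have h2 : G.Adj u' u := (htwin u).mp h1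
          have h3 : G.Adj u u' := G.symm _ _ h2
          have h4 : G.Adj u' u' := (htwin u').mp h3
          rw [hau', hbu']; exact h4
        · have h1 : G.Adj u (b : V) := hKL u b haK hbL
          rw [hau']; exact (htwin _).mp h1
        · have h1 : G.Adj (a : V) u := hKL a u haK hbL
          have h2 : G.Adj u' (a : V) := (htwin _).mp (G.symm _ _ h1)
          rw [hbu']; exact G.symm _ _ h2
        · exact hKL a b haK hbL
      have hKL1 : ∀ s t : V, s ∈ q.1 → t ∈ q.2 → G.Adj s t := by
        intro s t hs ht
        exact (hCcov s t).mpr ⟨q, hq, Or.inl ⟨hs, ht⟩⟩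
      have hKL2 : ∀ s t : V, s ∈ q.2 → t ∈ q.1 → G.Adj s t := by
        intro s t hs ht
        exact (hCcov s t).mpr ⟨q, hq, Or.inr ⟨hs, ht⟩⟩
      rcases hor with ⟨h1, h2⟩ | ⟨h1, h2⟩
      · exact key q.1 q.2 x y h1 h2 hKL1
      · exact key q.2 q.1 x y h1 h2 hKL2
  · rw [sjComponents_image_map, ← hCcard]
    exact Finset.card_image_le

/-- stp G ≤ stp of induced subgraph: add `u` to every component containing `u'`. -/
lemma stp_le_stp_induce (hne : u ≠ u') (htwin : ∀ x, G.Adj u x ↔ G.Adj u' x) :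
    G.stp ≤ (G.induce ({u}ᶜ : Finset V)).stp := by
  classical
  obtain ⟨C, ⟨hCne, hCcov⟩, hCcard⟩ := exists_min_cover (G.induce ({u}ᶜ : Finset V))
  have hu'mem : u' ∈ ({u}ᶜ : Finset V) := by simp [hne.symm]
  set uu' : {x // x ∈ ({u}ᶜ : Finset V)} := ⟨u', hu'mem⟩ with huu'
  set g : Finset {x // x ∈ ({u}ᶜ : Finset V)} → Finset V :=
    fun K => if uu' ∈ K then insert u (K.image Subtype.val) else K.image Subtype.val with hg
  have hmemg : ∀ (K : Finset {x // x ∈ ({u}ᶜ : Finset V)}) (x : V),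
      x ∈ g K ↔ (x = u ∧ uu' ∈ K) ∨ (∃ a ∈ K, (a : V) = x) := by
    intro K x
    by_cases h : uu' ∈ K <;> simp [hg, h, Finset.mem_image]
  refine le_trans (stp_le_of_cover (C := C.image (fun p => (g p.1, g p.2))) ⟨?_, ?_⟩) ?_
  · rintro p hp
    simp only [Finset.mem_image] at hp
    obtain ⟨q, hq, rfl⟩ := hp
    obtain ⟨⟨a, ha⟩, ⟨b, hb⟩⟩ := hCne q hq
    exact ⟨⟨a, (hmemg q.1 a).mpr (Or.inr ⟨a, ha, rfl⟩)⟩,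
           ⟨b, (hmemg q.2 b).mpr (Or.inr ⟨b, hb, rfl⟩)⟩⟩
  · intro x y
    constructor
    · intro hadj
      -- replace x, y by representatives avoiding u
      by_cases hx : x = u <;> by_cases hy : y = u
      · rw [hx, hy] at hadj ⊢
        have h1 : G.Adj u' u' := (htwin u').mp (G.symm _ _ ((htwin u).mp hadj))
        have h2 : (G.induce ({u}ᶜ : Finset V)).Adj uu' uu' := h1
        obtain ⟨p, hp, hor⟩ := (hCcov uu' uu').mp h2
        refine ⟨(g p.1, g p.2), Finset.mem_image_of_mem _ hp, ?_⟩
        rcases hor with ⟨h1', h2'⟩ | ⟨h1', h2'⟩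
        · exact Or.inl ⟨(hmemg p.1 u).mpr (Or.inl ⟨rfl, h1'⟩),
            (hmemg p.2 u).mpr (Or.inl ⟨rfl, h2'⟩)⟩
        · exact Or.inr ⟨(hmemg p.2 u).mpr (Or.inl ⟨rfl, h1'⟩),
            (hmemg p.1 u).mpr (Or.inl ⟨rfl, h2'⟩)⟩
      · rw [hx] at hadj ⊢
        have hyS : y ∈ ({u}ᶜ : Finset V) := by simp [hy]
        have h1 : G.Adj u' y := (htwin y).mp hadj
        have h2 : (G.induce ({u}ᶜ : Finset V)).Adj uu' ⟨y, hyS⟩ := h1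
        obtain ⟨p, hp, hor⟩ := (hCcov uu' ⟨y, hyS⟩).mp h2
        refine ⟨(g p.1, g p.2), Finset.mem_image_of_mem _ hp, ?_⟩
        rcases hor with ⟨h1', h2'⟩ | ⟨h1', h2'⟩
        · exact Or.inl ⟨(hmemg p.1 u).mpr (Or.inl ⟨rfl, h1'⟩),
            (hmemg p.2 y).mpr (Or.inr ⟨_, h2', rfl⟩)⟩
        · exact Or.inr ⟨(hmemg p.2 u).mpr (Or.inl ⟨rfl, h1'⟩),
            (hmemg p.1 y).mpr (Or.inr ⟨_, h2', rfl⟩)⟩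
      · rw [hy] at hadj ⊢
        have hxS : x ∈ ({u}ᶜ : Finset V) := by simp [hx]
        have h1 : G.Adj u' x := (htwin x).mp (G.symm _ _ hadj)
        have h2 : (G.induce ({u}ᶜ : Finset V)).Adj ⟨x, hxS⟩ uu' := G.symm _ _ h1
        obtain ⟨p, hp, hor⟩ := (hCcov ⟨x, hxS⟩ uu').mp h2
        refine ⟨(g p.1, g p.2), Finset.mem_image_of_mem _ hp, ?_⟩
        rcases hor with ⟨h1', h2'⟩ | ⟨h1', h2'⟩
        · exact Or.inl ⟨(hmemg p.1 x).mpr (Or.inr ⟨_, h1', rfl⟩),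
            (hmemg p.2 u).mpr (Or.inl ⟨rfl, h2'⟩)⟩
        · exact Or.inr ⟨(hmemg p.2 x).mpr (Or.inr ⟨_, h1', rfl⟩),
            (hmemg p.1 u).mpr (Or.inl ⟨rfl, h2'⟩)⟩
      · have hxS : x ∈ ({u}ᶜ : Finset V) := by simp [hx]
        have hyS : y ∈ ({u}ᶜ : Finset V) := by simp [hy]
        have h2 : (G.induce ({u}ᶜ : Finset V)).Adj ⟨x, hxS⟩ ⟨y, hyS⟩ := hadj
        obtain ⟨p, hp, hor⟩ := (hCcov ⟨x, hxS⟩ ⟨y, hyS⟩).mp h2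
        refine ⟨(g p.1, g p.2), Finset.mem_image_of_mem _ hp, ?_⟩
        rcases hor with ⟨h1', h2'⟩ | ⟨h1', h2'⟩
        · exact Or.inl ⟨(hmemg p.1 x).mpr (Or.inr ⟨_, h1', rfl⟩),
            (hmemg p.2 y).mpr (Or.inr ⟨_, h2', rfl⟩)⟩
        · exact Or.inr ⟨(hmemg p.2 x).mpr (Or.inr ⟨_, h1', rfl⟩),
            (hmemg p.1 y).mpr (Or.inr ⟨_, h2', rfl⟩)⟩
    · rintro ⟨p, hp, hor⟩
      simp only [Finset.mem_image] at hp
      obtain ⟨q, hq, rfl⟩ := hp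
      have hKL1 : ∀ s t, s ∈ q.1 → t ∈ q.2 → G.Adj (s : V) (t : V) := by
        intro s t hs ht
        exact (hCcov s t).mpr ⟨q, hq, Or.inl ⟨hs, ht⟩⟩
      have hKL2 : ∀ s t, s ∈ q.2 → t ∈ q.1 → G.Adj (s : V) (t : V) := by
        intro s t hs ht
        exact (hCcov s t).mpr ⟨q, hq, Or.inr ⟨hs, ht⟩⟩
      have key : ∀ (K L : Finset {x // x ∈ ({u}ᶜ : Finset V)}) (a b : V),
          a ∈ g K → b ∈ g L →
          (∀ s t, s ∈ K → t ∈ L → G.Adj (s : V) (t : V)) → G.Adj a b := by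
        intro K L a b ha hb hKL
        rcases (hmemg K a).mp ha with ⟨hau, haK⟩ | ⟨s, hs, hsa⟩ <;>
          rcases (hmemg L b).mp hb with ⟨hbu, hbL⟩ | ⟨t, ht, htb⟩
        · rw [hau, hbu]
          have h1 : G.Adj u' u' := hKL uu' uu' haK hbL
          exact (htwin u).mpr (G.symm _ _ ((htwin u').mpr h1))
        · rw [hau, ← htb]
          exact (htwin _).mpr (hKL uu' t haK ht)
        · rw [← hsa, hbu]
          exact G.symm _ _ ((htwin _).mpr (G.symm _ _ (hKL s uu' hs hbL)))
        · rw [← hsa, ← htb]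
          exact hKL s t hs ht
      rcases hor with ⟨h1, h2⟩ | ⟨h1, h2⟩
      · exact key q.1 q.2 x y h1 h2 hKL1
      · exact key q.2 q.1 x y h1 h2 hKL2
  · rw [sjComponents_image_map, ← hCcard]
    exact Finset.card_image_le

end Twin

/-- If `u` and `u'` are twin vertices (same neighbourhoods),
then `gap G = gap (G \ {u}) + 1`. -/
theorem stmt_4 {V : Type*} [Fintype V] [DecidableEq V] (G : LoopGraph V)
    (u u' : V) (hne : u ≠ u')
    (htwin : ∀ x, G.Adj u x ↔ G.Adj u' x) :
    G.gap = (G.induce ({u}ᶜ : Finset V)).gap + 1 := by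
  classical
  have heq : G.stp = (G.induce ({u}ᶜ : Finset V)).stp :=
    le_antisymm (stp_le_stp_induce G u u' hne htwin) (stp_induce_le G u u' hne htwin)
  have hcardsub : Fintype.card {x // x ∈ ({u}ᶜ : Finset V)} = Fintype.card V - 1 := by
    rw [Fintype.card_coe, Finset.card_compl, Finset.card_singleton]
  have hle : (G.induce ({u}ᶜ : Finset V)).stp ≤ Fintype.card V - 1 := by
    have := stp_le_card (G.induce ({u}ᶜ : Finset V))
    rwa [hcardsub] at this
  have hpos : 1 ≤ Fintype.card V := Fintype.card_pos_iff.mpr ⟨u⟩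
  unfold gap
  rw [hcardsub, heq]
  omega
end

section
/- For the path P_n on n ≥ 1 vertices, gap(P_n) = 1 if n is odd and gap(P_n) = 0 if n is even. Equivalently, stp(P_n) = n − 1 for odd n and stp(P_n) = n for even n. -/
open LoopGraph

/-- The path graph on `n` vertices (no loops). -/
def pathGraph (n : ℕ) : LoopGraph (Fin n) :=
  ⟨fun i j => i.val + 1 = j.val ∨ j.val + 1 = i.val, fun _ _ h => Or.symm h⟩
namespace Stmt5Aux

open Finset

variable {n : ℕ}

lemma adj_iff {u v : Fin n} :
    (pathGraph n).Adj u v ↔ (u.val + 1 = v.val ∨ v.val + 1 = u.val) := Iff.rfl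

lemma fst_mem {C : Finset (Finset (Fin n) × Finset (Fin n))} {p} (hp : p ∈ C) :
    p.1 ∈ sjComponents C := mem_union_left _ (mem_image_of_mem _ hp)

lemma snd_mem {C : Finset (Finset (Fin n) × Finset (Fin n))} {p} (hp : p ∈ C) :
    p.2 ∈ sjComponents C := mem_union_right _ (mem_image_of_mem _ hp)

lemma key_aux {C : Finset (Finset (Fin n) × Finset (Fin n))} {K L : Finset (Fin n)}
    (hKT : K ∈ sjComponents C)
    (hadjKL : ∀ u ∈ K, ∀ v ∈ L, (pathGraph n).Adj u v)
    {z c : Fin n} (hzK : z ∈ K) (hcL : c ∈ L)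
    (hz : ({z} : Finset (Fin n)) ∉ sjComponents C) :
    ∃ w, w ≠ z ∧ (pathGraph n).Adj w c ∧ ({z, w} : Finset (Fin n)) ∈ sjComponents C := by
  have hne : K ≠ {z} := fun h => hz (h ▸ hKT)
  obtain ⟨w, hw, hwz⟩ : ∃ w ∈ K, w ≠ z := by
    by_contra h
    push_neg at h
    exact hne (Finset.eq_singleton_iff_unique_mem.mpr ⟨hzK, h⟩)
  have hwadj : (pathGraph n).Adj w c := hadjKL w hw c hcL
  have hzadj : (pathGraph n).Adj z c := hadjKL z hzK c hcL
  have hsub : K = {z, w} := by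
    apply Finset.Subset.antisymm
    · intro u hu
      have h1 := adj_iff.mp (hadjKL u hu c hcL)
      have h2 := adj_iff.mp hzadj
      have h3 := adj_iff.mp hwadj
      have hne' : w.val ≠ z.val := fun h => hwz (Fin.ext h)
      have : u.val = z.val ∨ u.val = w.val := by omega
      simp only [Finset.mem_insert, Finset.mem_singleton]
      rcases this with h | h
      · exact Or.inl (Fin.ext h)
      · exact Or.inr (Fin.ext h)
    · intro u hu
      simp only [Finset.mem_insert, Finset.mem_singleton] at hu
      rcases hu with rfl | rfl
      · exact hzK
      · exact hw
  exact ⟨w, hwz, hwadj, hsub ▸ hKT⟩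

lemma key {C : Finset (Finset (Fin n) × Finset (Fin n))}
    (hC : (pathGraph n).IsCover C) {z c : Fin n}
    (hadj : (pathGraph n).Adj z c) (hz : ({z} : Finset (Fin n)) ∉ sjComponents C) :
    ∃ w, w ≠ z ∧ (pathGraph n).Adj w c ∧ ({z, w} : Finset (Fin n)) ∈ sjComponents C := by
  obtain ⟨p, hp, hcase⟩ := (hC.2 z c).mp hadj
  rcases hcase with ⟨hz1, hc2⟩ | ⟨hz2, hc1⟩
  · exact key_aux (fst_mem hp)
      (fun u hu v hv => (hC.2 u v).mpr ⟨p, hp, Or.inl ⟨hu, hv⟩⟩) hz1 hc2 hz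
  · exact key_aux (snd_mem hp)
      (fun u hu v hv => (hC.2 u v).mpr ⟨p, hp, Or.inr ⟨hu, hv⟩⟩) hz2 hc1 hz

lemma key_up {C : Finset (Finset (Fin n) × Finset (Fin n))}
    (hC : (pathGraph n).IsCover C) {z : Fin n} (hlt : z.val + 1 < n)
    (hz : ({z} : Finset (Fin n)) ∉ sjComponents C) :
    ∃ w : Fin n, w.val = z.val + 2 ∧ ({z, w} : Finset (Fin n)) ∈ sjComponents C := by
  have hadj : (pathGraph n).Adj z ⟨z.val + 1, hlt⟩ := Or.inl rfl
  obtain ⟨w, hwz, hwadj, hmem⟩ := key hC hadj hz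
  refine ⟨w, ?_, hmem⟩
  have h1 := adj_iff.mp hwadj
  have h2 : w.val ≠ z.val := fun h => hwz (Fin.ext h)
  simp only at h1
  omega

lemma key_down {C : Finset (Finset (Fin n) × Finset (Fin n))}
    (hC : (pathGraph n).IsCover C) {z : Fin n} (hpos : 0 < z.val)
    (hz : ({z} : Finset (Fin n)) ∉ sjComponents C) :
    ∃ w : Fin n, w.val + 2 = z.val ∧ ({z, w} : Finset (Fin n)) ∈ sjComponents C := by
  have hlt : z.val - 1 < n := by omega
  have hadj : (pathGraph n).Adj z ⟨z.val - 1, hlt⟩ := Or.inr (by simp; omega)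
  obtain ⟨w, hwz, hwadj, hmem⟩ := key hC hadj hz
  refine ⟨w, ?_, hmem⟩
  have h1 := adj_iff.mp hwadj
  have h2 : w.val ≠ z.val := fun h => hwz (Fin.ext h)
  simp only at h1
  omega

def pairUp (z : Fin n) : Finset (Fin n) :=
  insert z (univ.filter (fun w => w.val = z.val + 2))

def pairDown (z : Fin n) : Finset (Fin n) :=
  insert z (univ.filter (fun w => w.val + 2 = z.val))

lemma pairUp_eq {z w : Fin n} (h : w.val = z.val + 2) : pairUp z = {z, w} := by
  unfold pairUp
  congr 1
  ext x
  simp only [mem_filter, mem_univ, true_and, mem_singleton, Fin.ext_iff]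
  omega

lemma pairDown_eq {z w : Fin n} (h : w.val + 2 = z.val) : pairDown z = {z, w} := by
  unfold pairDown
  congr 1
  ext x
  simp only [mem_filter, mem_univ, true_and, mem_singleton, Fin.ext_iff]
  omega

lemma lower_even (hn : n % 2 = 0) {C : Finset (Finset (Fin n) × Finset (Fin n))}
    (hC : (pathGraph n).IsCover C) : n ≤ (sjComponents C).card := by
  classical
  set T := sjComponents C with hTdef
  set f : Fin n → Finset (Fin n) := fun z =>
    if ({z} : Finset (Fin n)) ∈ T then {z}
    else if z.val % 2 = 0 then pairUp z else pairDown z with hf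
  have spec : ∀ z : Fin n, ({z} : Finset (Fin n)) ∉ T →
      ∃ w : Fin n, f z = {z, w} ∧ ({z, w} : Finset (Fin n)) ∈ T ∧
        ((z.val % 2 = 0 ∧ w.val = z.val + 2) ∨ (z.val % 2 = 1 ∧ w.val + 2 = z.val)) := by
    intro z hz
    by_cases hpar : z.val % 2 = 0
    · have hlt : z.val + 1 < n := by have := z.isLt; omega
      obtain ⟨w, hw, hmem⟩ := key_up hC hlt hz
      exact ⟨w, by rw [hf]; simp only [hz, if_neg, hpar, if_pos]; exact pairUp_eq hw,
        hmem, Or.inl ⟨hpar, hw⟩⟩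
    · have hpos : 0 < z.val := by omega
      obtain ⟨w, hw, hmem⟩ := key_down hC hpos hz
      exact ⟨w, by rw [hf]; simp only [hz, if_neg, hpar, if_pos]; exact pairDown_eq hw,
        hmem, Or.inr ⟨by omega, hw⟩⟩
  have hcard : (univ : Finset (Fin n)).card ≤ T.card := by
    apply Finset.card_le_card_of_injOn f
    · intro z _
      by_cases hz : ({z} : Finset (Fin n)) ∈ T
      · rw [hf]; simpa [hz] using hz
      · obtain ⟨w, he, hm, _⟩ := spec z hz
        rw [he]; exact hm
    · intro z _ z' _ hzz'
      by_cases hz : ({z} : Finset (Fin n)) ∈ T <;>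
        by_cases hz' : ({z'} : Finset (Fin n)) ∈ T
      · have h : ({z} : Finset (Fin n)) = {z'} := by
          rw [hf] at hzz'; simpa [hz, hz'] using hzz'
        simpa using h
      · obtain ⟨w', he', _, hs'⟩ := spec z' hz'
        have h : ({z} : Finset (Fin n)) = {z', w'} := by
          have : f z = f z' := hzz'
          rw [he'] at this
          rw [hf] at this; simpa [hz] using this
        have h1 : z' ∈ ({z} : Finset (Fin n)) := h ▸ mem_insert_self z' {w'}
        have h2 : w' ∈ ({z} : Finset (Fin n)) := h ▸ (by simp : w' ∈ ({z', w'} : Finset (Fin n)))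
        simp only [mem_singleton] at h1 h2
        exfalso
        have : w'.val ≠ z'.val := by omega
        exact this (by rw [h2, ← h1])
      · obtain ⟨w, he, _, hs⟩ := spec z hz
        have h : ({z'} : Finset (Fin n)) = {z, w} := by
          have : f z = f z' := hzz'
          rw [he] at this
          rw [hf] at this; simpa [hz'] using this.symm
        have h1 : z ∈ ({z'} : Finset (Fin n)) := h ▸ mem_insert_self z {w}
        have h2 : w ∈ ({z'} : Finset (Fin n)) := h ▸ (by simp : w ∈ ({z, w} : Finset (Fin n)))
        simp only [mem_singleton] at h1 h2
        exfalso
        have : w.val ≠ z.val := by omega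
        exact this (by rw [h2, ← h1])
      · obtain ⟨w, he, _, hs⟩ := spec z hz
        obtain ⟨w', he', _, hs'⟩ := spec z' hz'
        have h : ({z, w} : Finset (Fin n)) = {z', w'} := by
          rw [← he, ← he']; exact hzz'
        have h1 : z ∈ ({z', w'} : Finset (Fin n)) := h ▸ mem_insert_self z {w}
        have h2 : z' ∈ ({z, w} : Finset (Fin n)) := h.symm ▸ mem_insert_self z' {w'}
        simp only [mem_insert, mem_singleton, Fin.ext_iff] at h1 h2
        apply Fin.ext
        omega
  simpa using hcard

lemma lower_odd (hn : n % 2 = 1) {C : Finset (Finset (Fin n) × Finset (Fin n))}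
    (hC : (pathGraph n).IsCover C) : n - 1 ≤ (sjComponents C).card := by
  classical
  set T := sjComponents C with hTdef
  set f : Fin n → Finset (Fin n) := fun z =>
    if ({z} : Finset (Fin n)) ∈ T then {z}
    else if z.val % 2 = 0 then pairDown z else pairUp z with hf
  have hn1 : 0 < n := by omega
  have spec : ∀ z : Fin n, z.val ≠ 0 → ({z} : Finset (Fin n)) ∉ T →
      ∃ w : Fin n, f z = {z, w} ∧ ({z, w} : Finset (Fin n)) ∈ T ∧
        ((z.val % 2 = 0 ∧ w.val + 2 = z.val) ∨ (z.val % 2 = 1 ∧ w.val = z.val + 2)) := by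
    intro z hz0 hz
    by_cases hpar : z.val % 2 = 0
    · have hpos : 0 < z.val := by omega
      obtain ⟨w, hw, hmem⟩ := key_down hC hpos hz
      exact ⟨w, by rw [hf]; simp only [hz, if_neg, hpar, if_pos]; exact pairDown_eq hw,
        hmem, Or.inl ⟨hpar, hw⟩⟩
    · have hlt : z.val + 1 < n := by have := z.isLt; omega
      obtain ⟨w, hw, hmem⟩ := key_up hC hlt hz
      exact ⟨w, by rw [hf]; simp only [hz, if_neg, hpar, if_pos]; exact pairUp_eq hw,
        hmem, Or.inr ⟨by omega, hw⟩⟩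
  have hcard : ((univ : Finset (Fin n)).erase ⟨0, hn1⟩).card ≤ T.card := by
    apply Finset.card_le_card_of_injOn f
    · intro z hzmem
      have hz0 : z.val ≠ 0 := by
        intro h
        exact (mem_erase.mp hzmem).1 (Fin.ext h)
      by_cases hz : ({z} : Finset (Fin n)) ∈ T
      · rw [hf]; simpa [hz] using hz
      · obtain ⟨w, he, hm, _⟩ := spec z hz0 hz
        rw [he]; exact hm
    · intro z hzm z' hzm' hzz'
      have hz0 : z.val ≠ 0 := fun h => (mem_erase.mp hzm).1 (Fin.ext h)
      have hz0' : z'.val ≠ 0 := fun h => (mem_erase.mp hzm').1 (Fin.ext h)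
      by_cases hz : ({z} : Finset (Fin n)) ∈ T <;>
        by_cases hz' : ({z'} : Finset (Fin n)) ∈ T
      · have h : ({z} : Finset (Fin n)) = {z'} := by
          rw [hf] at hzz'; simpa [hz, hz'] using hzz'
        simpa using h
      · obtain ⟨w', he', _, hs'⟩ := spec z' hz0' hz'
        have h : ({z} : Finset (Fin n)) = {z', w'} := by
          have : f z = f z' := hzz'
          rw [he'] at this
          rw [hf] at this; simpa [hz] using this
        have h1 : z' ∈ ({z} : Finset (Fin n)) := h ▸ mem_insert_self z' {w'}
        have h2 : w' ∈ ({z} : Finset (Fin n)) := h ▸ (by simp : w' ∈ ({z', w'} : Finset (Fin n)))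
        simp only [mem_singleton] at h1 h2
        exfalso
        have : w'.val ≠ z'.val := by omega
        exact this (by rw [h2, ← h1])
      · obtain ⟨w, he, _, hs⟩ := spec z hz0 hz
        have h : ({z'} : Finset (Fin n)) = {z, w} := by
          have : f z = f z' := hzz'
          rw [he] at this
          rw [hf] at this; simpa [hz'] using this.symm
        have h1 : z ∈ ({z'} : Finset (Fin n)) := h ▸ mem_insert_self z {w}
        have h2 : w ∈ ({z'} : Finset (Fin n)) := h ▸ (by simp : w ∈ ({z, w} : Finset (Fin n)))
        simp only [mem_singleton] at h1 h2
        exfalso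
        have : w.val ≠ z.val := by omega
        exact this (by rw [h2, ← h1])
      · obtain ⟨w, he, _, hs⟩ := spec z hz0 hz
        obtain ⟨w', he', _, hs'⟩ := spec z' hz0' hz'
        have h : ({z, w} : Finset (Fin n)) = {z', w'} := by
          rw [← he, ← he']; exact hzz'
        have h1 : z ∈ ({z', w'} : Finset (Fin n)) := h ▸ mem_insert_self z {w}
        have h2 : z' ∈ ({z, w} : Finset (Fin n)) := h.symm ▸ mem_insert_self z' {w'}
        simp only [mem_insert, mem_singleton, Fin.ext_iff] at h1 h2
        apply Fin.ext
        omega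
  have : ((univ : Finset (Fin n)).erase ⟨0, hn1⟩).card = n - 1 := by
    rw [Finset.card_erase_of_mem (mem_univ _)]
    simp
  omega

end Stmt5Aux

namespace Stmt5Aux

open Finset

variable {n : ℕ}

def coverOdd (n : ℕ) (hn : n % 2 = 1) : Finset (Finset (Fin n) × Finset (Fin n)) :=
  (Finset.range (n / 2)).attach.image (fun i =>
    (({⟨2 * i.1 + 1, by have := Finset.mem_range.mp i.2; omega⟩} : Finset (Fin n)),
     ({⟨2 * i.1, by have := Finset.mem_range.mp i.2; omega⟩,
       ⟨2 * i.1 + 2, by have := Finset.mem_range.mp i.2; omega⟩} : Finset (Fin n))))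

lemma coverOdd_edge (hn : n % 2 = 1) {u v : Fin n} (h : u.val + 1 = v.val) :
    ∃ p ∈ coverOdd n hn, (u ∈ p.1 ∧ v ∈ p.2) ∨ (u ∈ p.2 ∧ v ∈ p.1) := by
  have hv := v.isLt
  by_cases hpar : u.val % 2 = 0
  · -- u even, center is v = u+1 = 2i+1, i = u/2
    have hi : u.val / 2 ∈ Finset.range (n / 2) := by
      rw [Finset.mem_range]; omega
    refine ⟨_, Finset.mem_image_of_mem _ (Finset.mem_attach _ ⟨u.val / 2, hi⟩), Or.inr ⟨?_, ?_⟩⟩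
    · simp only [mem_insert, mem_singleton, Fin.ext_iff]
      left; omega
    · simp only [mem_singleton, Fin.ext_iff]
      omega
  · -- u odd, center is u = 2i+1
    have hi : u.val / 2 ∈ Finset.range (n / 2) := by
      rw [Finset.mem_range]; omega
    refine ⟨_, Finset.mem_image_of_mem _ (Finset.mem_attach _ ⟨u.val / 2, hi⟩), Or.inl ⟨?_, ?_⟩⟩
    · simp only [mem_singleton, Fin.ext_iff]
      omega
    · simp only [mem_insert, mem_singleton, Fin.ext_iff]
      right; omega

lemma coverOdd_isCover (hn : n % 2 = 1) : (pathGraph n).IsCover (coverOdd n hn) := by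
  constructor
  · intro p hp
    simp only [coverOdd, Finset.mem_image, Finset.mem_attach, true_and] at hp
    obtain ⟨i, rfl⟩ := hp
    exact ⟨⟨_, mem_singleton_self _⟩, ⟨_, mem_insert_self _ _⟩⟩
  · intro u v
    constructor
    · intro hadj
      rcases adj_iff.mp hadj with h | h
      · exact coverOdd_edge hn h
      · obtain ⟨p, hp, hc⟩ := coverOdd_edge hn h
        exact ⟨p, hp, hc.symm.imp (fun h => ⟨h.2, h.1⟩) (fun h => ⟨h.2, h.1⟩)⟩
    · rintro ⟨p, hp, hc⟩
      simp only [coverOdd, Finset.mem_image, Finset.mem_attach, true_and] at hp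
      obtain ⟨i, rfl⟩ := hp
      rcases hc with ⟨h1, h2⟩ | ⟨h1, h2⟩ <;>
        simp only [mem_insert, mem_singleton, Fin.ext_iff] at h1 h2 <;>
        rw [adj_iff] <;> omega

lemma coverOdd_card (hn : n % 2 = 1) :
    (sjComponents (coverOdd n hn)).card ≤ n - 1 := by
  have h1 : (coverOdd n hn).card ≤ n / 2 := by
    calc (coverOdd n hn).card ≤ (Finset.range (n / 2)).attach.card :=
          Finset.card_image_le
    _ = n / 2 := by rw [Finset.card_attach, Finset.card_range]
  calc (sjComponents (coverOdd n hn)).card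
      ≤ ((coverOdd n hn).image Prod.fst).card + ((coverOdd n hn).image Prod.snd).card :=
        Finset.card_union_le _ _
    _ ≤ (coverOdd n hn).card + (coverOdd n hn).card := by
        gcongr <;> exact Finset.card_image_le
    _ ≤ n / 2 + n / 2 := by omega
    _ ≤ n - 1 := by omega

def coverEven (n : ℕ) (hn : n % 2 = 0) (h2 : 2 ≤ n) :
    Finset (Finset (Fin n) × Finset (Fin n)) :=
  insert (({⟨n - 2, by omega⟩} : Finset (Fin n)), ({⟨n - 1, by omega⟩} : Finset (Fin n)))
    ((Finset.range (n / 2 - 1)).attach.image (fun i =>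
      (({⟨2 * i.1 + 1, by have := Finset.mem_range.mp i.2; omega⟩} : Finset (Fin n)),
       ({⟨2 * i.1, by have := Finset.mem_range.mp i.2; omega⟩,
         ⟨2 * i.1 + 2, by have := Finset.mem_range.mp i.2; omega⟩} : Finset (Fin n)))))

lemma coverEven_edge (hn : n % 2 = 0) (h2 : 2 ≤ n) {u v : Fin n} (h : u.val + 1 = v.val) :
    ∃ p ∈ coverEven n hn h2, (u ∈ p.1 ∧ v ∈ p.2) ∨ (u ∈ p.2 ∧ v ∈ p.1) := by
  have hv := v.isLt
  by_cases hlast : u.val = n - 2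
  · refine ⟨_, Finset.mem_insert_self _ _, Or.inl ⟨?_, ?_⟩⟩
    · simp only [mem_singleton, Fin.ext_iff]; omega
    · simp only [mem_singleton, Fin.ext_iff]; omega
  · by_cases hpar : u.val % 2 = 0
    · have hi : u.val / 2 ∈ Finset.range (n / 2 - 1) := by
        rw [Finset.mem_range]; omega
      refine ⟨_, Finset.mem_insert_of_mem
        (Finset.mem_image_of_mem _ (Finset.mem_attach _ ⟨u.val / 2, hi⟩)), Or.inr ⟨?_, ?_⟩⟩
      · simp only [mem_insert, mem_singleton, Fin.ext_iff]
        left; omega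
      · simp only [mem_singleton, Fin.ext_iff]
        omega
    · have hi : u.val / 2 ∈ Finset.range (n / 2 - 1) := by
        rw [Finset.mem_range]; omega
      refine ⟨_, Finset.mem_insert_of_mem
        (Finset.mem_image_of_mem _ (Finset.mem_attach _ ⟨u.val / 2, hi⟩)), Or.inl ⟨?_, ?_⟩⟩
      · simp only [mem_singleton, Fin.ext_iff]
        omega
      · simp only [mem_insert, mem_singleton, Fin.ext_iff]
        right; omega

lemma coverEven_isCover (hn : n % 2 = 0) (h2 : 2 ≤ n) :
    (pathGraph n).IsCover (coverEven n hn h2) := by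
  constructor
  · intro p hp
    simp only [coverEven, Finset.mem_insert, Finset.mem_image, Finset.mem_attach,
      true_and] at hp
    rcases hp with rfl | ⟨i, rfl⟩
    · exact ⟨⟨_, mem_singleton_self _⟩, ⟨_, mem_singleton_self _⟩⟩
    · exact ⟨⟨_, mem_singleton_self _⟩, ⟨_, mem_insert_self _ _⟩⟩
  · intro u v
    constructor
    · intro hadj
      rcases adj_iff.mp hadj with h | h
      · exact coverEven_edge hn h2 h
      · obtain ⟨p, hp, hc⟩ := coverEven_edge hn h2 h
        exact ⟨p, hp, hc.symm.imp (fun h => ⟨h.2, h.1⟩) (fun h => ⟨h.2, h.1⟩)⟩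
    · rintro ⟨p, hp, hc⟩
      simp only [coverEven, Finset.mem_insert, Finset.mem_image, Finset.mem_attach,
        true_and] at hp
      rcases hp with rfl | ⟨i, rfl⟩
      · rcases hc with ⟨h1, h2'⟩ | ⟨h1, h2'⟩ <;>
          simp only [mem_singleton, Fin.ext_iff] at h1 h2' <;>
          rw [adj_iff] <;> omega
      · rcases hc with ⟨h1, h2'⟩ | ⟨h1, h2'⟩ <;>
          simp only [mem_insert, mem_singleton, Fin.ext_iff] at h1 h2' <;>
          rw [adj_iff] <;> omega

lemma coverEven_card (hn : n % 2 = 0) (h2 : 2 ≤ n) :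
    (sjComponents (coverEven n hn h2)).card ≤ n := by
  have h1 : (coverEven n hn h2).card ≤ n / 2 := by
    calc (coverEven n hn h2).card
        ≤ ((Finset.range (n / 2 - 1)).attach.image _).card + 1 := Finset.card_insert_le _ _
      _ ≤ (Finset.range (n / 2 - 1)).attach.card + 1 := by gcongr; exact Finset.card_image_le
      _ = (n / 2 - 1) + 1 := by rw [Finset.card_attach, Finset.card_range]
      _ ≤ n / 2 := by omega
  calc (sjComponents (coverEven n hn h2)).card
      ≤ ((coverEven n hn h2).image Prod.fst).card + ((coverEven n hn h2).image Prod.snd).card :=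
        Finset.card_union_le _ _
    _ ≤ (coverEven n hn h2).card + (coverEven n hn h2).card := by
        gcongr <;> exact Finset.card_image_le
    _ ≤ n := by omega

end Stmt5Aux

/-- `gap (P n) = 1` for odd `n`, `gap (P n) = 0` for even `n`;
equivalently `stp (P n) = n - 1` for odd `n` and `stp (P n) = n` for even `n`. -/
theorem stmt_5 (n : ℕ) (hn : 1 ≤ n) :
    (Odd n → (pathGraph n).gap = 1 ∧ (pathGraph n).stp = n - 1) ∧
    (Even n → (pathGraph n).gap = 0 ∧ (pathGraph n).stp = n) := by
  constructor
  · intro hodd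
    have hmod : n % 2 = 1 := Nat.odd_iff.mp hodd
    have hmem : (sjComponents (Stmt5Aux.coverOdd n hmod)).card ∈
        {m | ∃ C : Finset (Finset (Fin n) × Finset (Fin n)),
          (pathGraph n).IsCover C ∧ (sjComponents C).card = m} :=
      ⟨_, Stmt5Aux.coverOdd_isCover hmod, rfl⟩
    have hub : (pathGraph n).stp ≤ n - 1 :=
      le_trans (Nat.sInf_le hmem) (Stmt5Aux.coverOdd_card hmod)
    have hlb : n - 1 ≤ (pathGraph n).stp := by
      apply le_csInf ⟨_, hmem⟩
      rintro m ⟨C, hC, rfl⟩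
      exact Stmt5Aux.lower_odd hmod hC
    have hstp : (pathGraph n).stp = n - 1 := le_antisymm hub hlb
    refine ⟨?_, hstp⟩
    rw [LoopGraph.gap, hstp, Fintype.card_fin]
    omega
  · intro heven
    have hmod : n % 2 = 0 := Nat.even_iff.mp heven
    have h2 : 2 ≤ n := by omega
    have hmem : (sjComponents (Stmt5Aux.coverEven n hmod h2)).card ∈
        {m | ∃ C : Finset (Finset (Fin n) × Finset (Fin n)),
          (pathGraph n).IsCover C ∧ (sjComponents C).card = m} :=
      ⟨_, Stmt5Aux.coverEven_isCover hmod h2, rfl⟩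
    have hub : (pathGraph n).stp ≤ n :=
      le_trans (Nat.sInf_le hmem) (Stmt5Aux.coverEven_card hmod h2)
    have hlb : n ≤ (pathGraph n).stp := by
      apply le_csInf ⟨_, hmem⟩
      rintro m ⟨C, hC, rfl⟩
      exact Stmt5Aux.lower_even hmod hC
    have hstp : (pathGraph n).stp = n := le_antisymm hub hlb
    refine ⟨?_, hstp⟩
    rw [LoopGraph.gap, hstp, Fintype.card_fin]
    omega
end

section
/- For the cycle C_n on n ≥ 3 vertices, gap(C_4) = 2 and gap(C_n) = 0 for all n ≠ 4. -/
open LoopGraph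

/-- The cycle graph on `n` vertices (no loops). -/
def cycleGraph (n : ℕ) : LoopGraph (Fin n) :=
  ⟨fun i j => (i.val + 1) % n = j.val ∨ (j.val + 1) % n = i.val, fun _ _ h => Or.symm h⟩

-- ============ aux ============

lemma modk (n a k : ℕ) (ha : a < n) (hk : k ≤ n) :
    ((a + k) % n = a + k ∧ a + k < n) ∨ ((a + k) % n = a + k - n ∧ n ≤ a + k ∧ a + k - n < n) := by
  rcases Nat.lt_or_ge (a+k) n with h | h
  · exact Or.inl ⟨Nat.mod_eq_of_lt h, h⟩
  · right
    refine ⟨?_, h, ?_⟩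
    · rw [Nat.mod_eq_sub_mod h, Nat.mod_eq_of_lt (by omega)]
    · omega

def fa {n : ℕ} (h : 0 < n) (v : Fin n) (k : ℕ) : Fin n := ⟨(v.val + k) % n, Nat.mod_lt _ h⟩

lemma fa_val {n : ℕ} (h : 0 < n) (v : Fin n) (k : ℕ) : (fa h v k).val = (v.val + k) % n := rfl

lemma adjv {n : ℕ} {u v : Fin n} (h : (cycleGraph n).Adj u v) :
    (u.val + 1) % n = v.val ∨ (v.val + 1) % n = u.val := h

lemma star {n : ℕ} (h3 : 3 ≤ n) (h4 : n ≠ 4) {K L : Finset (Fin n)}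
    (hadj : ∀ k ∈ K, ∀ l ∈ L, (cycleGraph n).Adj k l)
    (hK : 1 < K.card) (hL : 1 < L.card) : False := by
  obtain ⟨k1, hk1, k2, hk2, hkne⟩ := Finset.one_lt_card.mp hK
  obtain ⟨l1, hl1, l2, hl2, hlne⟩ := Finset.one_lt_card.mp hL
  have a11 := adjv (hadj k1 hk1 l1 hl1)
  have a12 := adjv (hadj k1 hk1 l2 hl2)
  have a21 := adjv (hadj k2 hk2 l1 hl1)
  have a22 := adjv (hadj k2 hk2 l2 hl2)
  have hkne' : k1.val ≠ k2.val := fun h => hkne (Fin.val_injective h)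
  have hlne' : l1.val ≠ l2.val := fun h => hlne (Fin.val_injective h)
  have b1 := k1.isLt; have b2 := k2.isLt; have b3 := l1.isLt; have b4 := l2.isLt
  have m1 := modk n k1.val 1 k1.isLt (by omega)
  have m2 := modk n k2.val 1 k2.isLt (by omega)
  have m3 := modk n l1.val 1 l1.isLt (by omega)
  have m4 := modk n l2.val 1 l2.isLt (by omega)
  omega

lemma nbr {n : ℕ} (h3 : 3 ≤ n) {v w : Fin n} (hpos : 0 < n)
    (h : (cycleGraph n).Adj w (fa hpos v 1)) : w = v ∨ w = fa hpos v 2 := by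
  have h' := adjv h
  rw [fa_val] at h'
  have goalv : w.val = v.val ∨ w.val = (v.val + 2) % n := by
    have b1 := v.isLt; have b2 := w.isLt
    have m1 := modk n v.val 1 v.isLt (by omega)
    have m2 := modk n v.val 2 v.isLt (by omega)
    have m3 := modk n w.val 1 w.isLt (by omega)
    have hlt : (v.val+1) % n < n := Nat.mod_lt _ hpos
    have m4 := modk n ((v.val+1)%n) 1 hlt (by omega)
    rcases h' with h' | h' <;> rcases m1 with m1 | m1 <;> rcases m2 with m2 | m2 <;> rcases m3 with m3 | m3 <;> rcases m4 with m4 | m4 <;> omega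
  exact goalv.imp (fun h => Fin.val_injective h) (fun h => Fin.val_injective h)

lemma fa2_ne {n : ℕ} (h3 : 3 ≤ n) (hpos : 0 < n) (v : Fin n) : fa hpos v 2 ≠ v := by
  intro h
  have hv : (v.val + 2) % n = v.val := congrArg Fin.val h
  have := v.isLt
  have m2 := modk n v.val 2 v.isLt (by omega)
  omega

lemma pair_inj {n : ℕ} (h3 : 3 ≤ n) (h4 : n ≠ 4) (hpos : 0 < n) {v w : Fin n}
    (h : ({v, fa hpos v 2} : Finset (Fin n)) = {w, fa hpos w 2}) : v = w := by
  have h1 : v ∈ ({w, fa hpos w 2} : Finset (Fin n)) := h ▸ Finset.mem_insert_self _ _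
  have h2 : w ∈ ({v, fa hpos v 2} : Finset (Fin n)) := h.symm ▸ Finset.mem_insert_self _ _
  simp only [Finset.mem_insert, Finset.mem_singleton] at h1 h2
  have h1' : v.val = w.val ∨ v.val = (w.val + 2) % n :=
    h1.imp (congrArg Fin.val) (congrArg Fin.val)
  have h2' : w.val = v.val ∨ w.val = (v.val + 2) % n :=
    h2.imp (congrArg Fin.val) (congrArg Fin.val)
  have b1 := v.isLt; have b2 := w.isLt
  have m1 := modk n v.val 2 v.isLt (by omega)
  have m2 := modk n w.val 2 w.isLt (by omega)
  exact Fin.val_injective (by omega)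

lemma keyaux {n : ℕ} (h3 : 3 ≤ n) (h4 : n ≠ 4) (hpos : 0 < n) {K L : Finset (Fin n)}
    (hadj : ∀ k ∈ K, ∀ l ∈ L, (cycleGraph n).Adj k l)
    (v : Fin n) (hvK : v ∈ K) (hvL : fa hpos v 1 ∈ L) :
    K = {v} ∨ K = {v, fa hpos v 2} := by
  by_cases hK1 : K.card = 1
  · left
    obtain ⟨a, ha⟩ := Finset.card_eq_one.mp hK1
    rw [ha] at hvK ⊢
    rw [Finset.mem_singleton] at hvK
    rw [hvK]
  · right
    have hK2 : 1 < K.card := by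
      have : 0 < K.card := Finset.card_pos.mpr ⟨v, hvK⟩
      omega
    have hL1 : L.card = 1 := by
      by_contra hL1
      have hL2 : 1 < L.card := by
        have : 0 < L.card := Finset.card_pos.mpr ⟨_, hvL⟩
        omega
      exact star h3 h4 hadj hK2 hL2
    have hLeq : L = {fa hpos v 1} := by
      obtain ⟨a, ha⟩ := Finset.card_eq_one.mp hL1
      rw [ha] at hvL ⊢
      rw [Finset.mem_singleton] at hvL
      rw [hvL]
    have hsub : K ⊆ {v, fa hpos v 2} := by
      intro k hk
      have hadjk : (cycleGraph n).Adj k (fa hpos v 1) := by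
        have := hadj k hk (fa hpos v 1) (by rw [hLeq]; exact Finset.mem_singleton_self _)
        exact this
      rcases nbr h3 hpos hadjk with h | h
      · simp [h]
      · simp [h]
    have hmem2 : fa hpos v 2 ∈ K := by
      obtain ⟨k, hk, hkv⟩ := Finset.exists_mem_ne hK2 v
      have := hsub hk
      simp only [Finset.mem_insert, Finset.mem_singleton] at this
      rcases this with h | h
      · exact absurd h hkv
      · rwa [h] at hk
    exact Finset.Subset.antisymm hsub (by
      rw [Finset.insert_subset_iff]
      exact ⟨hvK, Finset.singleton_subset_iff.mpr hmem2⟩)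

lemma cycle_lb {n : ℕ} (h3 : 3 ≤ n) (h4 : n ≠ 4) (C : Finset (Finset (Fin n) × Finset (Fin n)))
    (hC : (cycleGraph n).IsCover C) : n ≤ (sjComponents C).card := by
  have hpos : 0 < n := by omega
  set S := sjComponents C with hS
  have memS1 : ∀ p ∈ C, p.1 ∈ S := fun p hp =>
    Finset.mem_union_left _ (Finset.mem_image_of_mem _ hp)
  have memS2 : ∀ p ∈ C, p.2 ∈ S := fun p hp =>
    Finset.mem_union_right _ (Finset.mem_image_of_mem _ hp)
  have hadj : ∀ p ∈ C, ∀ k ∈ p.1, ∀ l ∈ p.2, (cycleGraph n).Adj k l :=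
    fun p hp k hk l hl => (hC.2 k l).mpr ⟨p, hp, Or.inl ⟨hk, hl⟩⟩
  have key : ∀ v : Fin n, ({v} : Finset (Fin n)) ∉ S →
      ({v, fa hpos v 2} : Finset (Fin n)) ∈ S := by
    intro v hv
    have hedge : (cycleGraph n).Adj v (fa hpos v 1) := Or.inl rfl
    obtain ⟨p, hp, hor⟩ := (hC.2 _ _).mp hedge
    rcases hor with ⟨hvK, hvL⟩ | ⟨hvK, hvL⟩
    · rcases keyaux h3 h4 hpos (hadj p hp) v hvK hvL with h | h
      · exact absurd (h ▸ memS1 p hp) hv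
      · exact h ▸ memS1 p hp
    · have hadj' : ∀ k ∈ p.2, ∀ l ∈ p.1, (cycleGraph n).Adj k l :=
        fun k hk l hl => (cycleGraph n).symm _ _ (hadj p hp l hl k hk)
      rcases keyaux h3 h4 hpos hadj' v hvK hvL with h | h
      · exact absurd (h ▸ memS2 p hp) hv
      · exact h ▸ memS2 p hp
  classical
  set g : Fin n → Finset (Fin n) :=
    fun v => if ({v} : Finset (Fin n)) ∈ S then {v} else {v, fa hpos v 2} with hg
  have hmaps : ∀ v ∈ (Finset.univ : Finset (Fin n)), g v ∈ S := by
    intro v _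
    rw [hg]
    dsimp only
    split_ifs with h
    · exact h
    · exact key v h
  have hinj : Set.InjOn g (Finset.univ : Finset (Fin n)) := by
    intro v _ w _ hgw
    rw [hg] at hgw
    dsimp only at hgw
    split_ifs at hgw with h1 h2 h2
    · exact Finset.singleton_inj.mp hgw
    · exfalso
      have hw : w ∈ ({v} : Finset (Fin n)) := hgw ▸ Finset.mem_insert_self _ _
      have hw2 : fa hpos w 2 ∈ ({v} : Finset (Fin n)) := by
        rw [hgw]; exact Finset.mem_insert_of_mem (Finset.mem_singleton_self _)
      rw [Finset.mem_singleton] at hw hw2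
      exact fa2_ne h3 hpos w (hw2.trans hw.symm)
    · exfalso
      have hw : v ∈ ({w} : Finset (Fin n)) := hgw ▸ Finset.mem_insert_self _ _
      have hw2 : fa hpos v 2 ∈ ({w} : Finset (Fin n)) := by
        rw [← hgw]; exact Finset.mem_insert_of_mem (Finset.mem_singleton_self _)
      rw [Finset.mem_singleton] at hw hw2
      exact fa2_ne h3 hpos v (hw2.trans hw.symm)
    · exact pair_inj h3 h4 hpos hgw
  calc n = (Finset.univ : Finset (Fin n)).card := by simp
  _ ≤ S.card := Finset.card_le_card_of_injOn g hmaps hinj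

def edgeCover (n : ℕ) (h : 0 < n) : Finset (Finset (Fin n) × Finset (Fin n)) :=
  Finset.univ.image (fun v => (({v} : Finset (Fin n)), ({fa h v 1} : Finset (Fin n))))

lemma edgeCover_isCover {n : ℕ} (h3 : 3 ≤ n) (hpos : 0 < n) :
    (cycleGraph n).IsCover (edgeCover n hpos) := by
  constructor
  · intro p hp
    simp only [edgeCover, Finset.mem_image, Finset.mem_univ, true_and] at hp
    obtain ⟨v, rfl⟩ := hp
    exact ⟨Finset.singleton_nonempty _, Finset.singleton_nonempty _⟩
  · intro u v
    constructor
    · intro h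
      rcases adjv h with h' | h'
      · refine ⟨({u}, {fa hpos u 1}), ?_, Or.inl ⟨Finset.mem_singleton_self _, ?_⟩⟩
        · simp only [edgeCover, Finset.mem_image, Finset.mem_univ, true_and]
          exact ⟨u, rfl⟩
        · rw [Finset.mem_singleton]
          exact (Fin.val_injective h').symm
      · refine ⟨({v}, {fa hpos v 1}), ?_, Or.inr ⟨?_, Finset.mem_singleton_self _⟩⟩
        · simp only [edgeCover, Finset.mem_image, Finset.mem_univ, true_and]
          exact ⟨v, rfl⟩
        · rw [Finset.mem_singleton]
          exact (Fin.val_injective h').symm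
    · rintro ⟨p, hp, hor⟩
      simp only [edgeCover, Finset.mem_image, Finset.mem_univ, true_and] at hp
      obtain ⟨w, rfl⟩ := hp
      rcases hor with ⟨h1, h2⟩ | ⟨h1, h2⟩ <;>
        rw [Finset.mem_singleton] at h1 h2 <;> subst h1 <;> subst h2
      · exact Or.inl rfl
      · exact Or.inr rfl

instance cycAdjDec (n : ℕ) : DecidableRel (cycleGraph n).Adj := fun i j =>
  inferInstanceAs (Decidable ((i.val + 1) % n = j.val ∨ (j.val + 1) % n = i.val))

set_option maxRecDepth 10000 in
lemma c4_cover : (cycleGraph 4).IsCover {(({0,2} : Finset (Fin 4)), ({1,3} : Finset (Fin 4)))} := by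
  constructor
  · intro p hp
    rw [Finset.mem_singleton] at hp
    subst hp
    exact ⟨⟨0, by decide⟩, ⟨1, by decide⟩⟩
  · decide

lemma c4_stp : (cycleGraph 4).stp = 2 := by
  have hmem : 2 ∈ {m | ∃ C : Finset (Finset (Fin 4) × Finset (Fin 4)),
      (cycleGraph 4).IsCover C ∧ (sjComponents C).card = m} :=
    ⟨_, c4_cover, by decide⟩
  rw [stp]
  apply le_antisymm
  · exact Nat.sInf_le hmem
  · refine le_csInf ⟨2, hmem⟩ ?_
    rintro m ⟨C, hC, rfl⟩
    by_contra hlt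
    push_neg at hlt
    obtain ⟨p, hp, hor⟩ := (hC.2 0 1).mp (by decide)
    have h1 : p.1 ∈ sjComponents C := Finset.mem_union_left _ (Finset.mem_image_of_mem _ hp)
    have h2 : p.2 ∈ sjComponents C := Finset.mem_union_right _ (Finset.mem_image_of_mem _ hp)
    have heq : p.1 = p.2 := Finset.card_le_one.mp (by omega) _ h1 _ h2
    obtain ⟨u, hu⟩ := (hC.1 p hp).1
    have hloop : (cycleGraph 4).Adj u u := (hC.2 u u).mpr ⟨p, hp, Or.inl ⟨hu, heq ▸ hu⟩⟩
    have noLoop : ∀ u : Fin 4, ¬ (cycleGraph 4).Adj u u := by decide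
    exact noLoop u hloop


/-- `gap C₄ = 2` and `gap Cₙ = 0` for all `n ≥ 3`, `n ≠ 4`. -/
theorem stmt_6 :
    (cycleGraph 4).gap = 2 ∧
    ∀ n : ℕ, 3 ≤ n → n ≠ 4 → (cycleGraph n).gap = 0 := by
  constructor
  · rw [gap, c4_stp, Fintype.card_fin]
  · intro n h3 h4
    have hpos : 0 < n := by omega
    rw [gap, Fintype.card_fin]
    apply Nat.sub_eq_zero_of_le
    rw [stp]
    refine le_csInf ⟨(sjComponents (edgeCover n hpos)).card,
      edgeCover n hpos, edgeCover_isCover h3 hpos, rfl⟩ ?_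
    rintro m ⟨C, hC, rfl⟩
    exact cycle_lb h3 h4 C hC
end

section
/- Let G be a graph containing vertex-disjoint induced subgraphs G1, G2 with V(G) = V(G1) ∪ V(G2), such that there do not exist u1, v1 ∈ V(G1) and u2, v2 ∈ V(G2) with {u_i, v_j} ∈ E(G) for all i,j ∈ {1,2}. Then gap(G) ≤ gap(G1) + gap(G2); equivalently stp(G) ≥ stp(G1) + stp(G2). -/
open LoopGraph

lemma exists_cover_s7 {V : Type*} [Fintype V] [DecidableEq V] (G : LoopGraph V) :
    ∃ C : Finset (Finset V × Finset V), G.IsCover C := by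
  classical
  refine ⟨((Finset.univ ×ˢ Finset.univ).filter (fun p : V × V => G.Adj p.1 p.2)).image
    (fun p => ({p.1}, {p.2})), ?_, ?_⟩
  · intro p hp
    simp only [Finset.mem_image] at hp
    obtain ⟨q, _, rfl⟩ := hp
    exact ⟨⟨q.1, Finset.mem_singleton_self _⟩, ⟨q.2, Finset.mem_singleton_self _⟩⟩
  · intro u v
    constructor
    · intro hadj
      refine ⟨({u}, {v}), ?_, Or.inl ⟨Finset.mem_singleton_self _, Finset.mem_singleton_self _⟩⟩
      simp only [Finset.mem_image, Finset.mem_filter, Finset.mem_product, Finset.mem_univ,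
        true_and]
      exact ⟨(u, v), hadj, rfl⟩
    · rintro ⟨p, hp, hcase⟩
      simp only [Finset.mem_image, Finset.mem_filter, Finset.mem_product, Finset.mem_univ,
        true_and] at hp
      obtain ⟨q, hq, rfl⟩ := hp
      rcases hcase with ⟨h1, h2⟩ | ⟨h1, h2⟩ <;>
        simp only [Finset.mem_singleton] at h1 h2 <;> subst h1 <;> subst h2
      · exact hq
      · exact G.symm _ _ hq

section Restrict

variable {V : Type*} [Fintype V] [DecidableEq V]

lemma cover_restrict (G : LoopGraph V) (C : Finset (Finset V × Finset V))
    (hC : G.IsCover C) (t : Finset V) :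
    (G.induce t).IsCover
      ((C.filter (fun p => (p.1 ∩ t).Nonempty ∧ (p.2 ∩ t).Nonempty)).image
        (fun p => (p.1.subtype (· ∈ t), p.2.subtype (· ∈ t)))) := by
  classical
  constructor
  · intro q hq
    simp only [Finset.mem_image, Finset.mem_filter] at hq
    obtain ⟨p, ⟨_, ⟨x, hx⟩, ⟨y, hy⟩⟩, rfl⟩ := hq
    simp only [Finset.mem_inter] at hx hy
    exact ⟨⟨⟨x, hx.2⟩, Finset.mem_subtype.mpr hx.1⟩, ⟨⟨y, hy.2⟩, Finset.mem_subtype.mpr hy.1⟩⟩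
  · intro u v
    constructor
    · intro hadj
      obtain ⟨p, hp, hcase⟩ := (hC.2 u.1 v.1).mp hadj
      rcases hcase with ⟨h1, h2⟩ | ⟨h1, h2⟩
      · refine ⟨(p.1.subtype (· ∈ t), p.2.subtype (· ∈ t)), ?_,
          Or.inl ⟨Finset.mem_subtype.mpr h1, Finset.mem_subtype.mpr h2⟩⟩
        simp only [Finset.mem_image, Finset.mem_filter]
        exact ⟨p, ⟨hp, ⟨u.1, Finset.mem_inter.mpr ⟨h1, u.2⟩⟩,
          ⟨v.1, Finset.mem_inter.mpr ⟨h2, v.2⟩⟩⟩, rfl⟩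
      · refine ⟨(p.1.subtype (· ∈ t), p.2.subtype (· ∈ t)), ?_,
          Or.inr ⟨Finset.mem_subtype.mpr h1, Finset.mem_subtype.mpr h2⟩⟩
        simp only [Finset.mem_image, Finset.mem_filter]
        exact ⟨p, ⟨hp, ⟨v.1, Finset.mem_inter.mpr ⟨h2, v.2⟩⟩,
          ⟨u.1, Finset.mem_inter.mpr ⟨h1, u.2⟩⟩⟩, rfl⟩
    · rintro ⟨q, hq, hcase⟩
      simp only [Finset.mem_image, Finset.mem_filter] at hq
      obtain ⟨p, ⟨hpC, _, _⟩, rfl⟩ := hq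
      rcases hcase with ⟨h1, h2⟩ | ⟨h1, h2⟩
      · exact (hC.2 u.1 v.1).mpr ⟨p, hpC,
          Or.inl ⟨Finset.mem_subtype.mp h1, Finset.mem_subtype.mp h2⟩⟩
      · exact (hC.2 u.1 v.1).mpr ⟨p, hpC,
          Or.inr ⟨Finset.mem_subtype.mp h1, Finset.mem_subtype.mp h2⟩⟩

lemma comps_restrict (C : Finset (Finset V × Finset V)) (t : Finset V) :
    sjComponents ((C.filter (fun p => (p.1 ∩ t).Nonempty ∧ (p.2 ∩ t).Nonempty)).image
        (fun p => (p.1.subtype (· ∈ t), p.2.subtype (· ∈ t)))) =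
      (sjComponents (C.filter (fun p => (p.1 ∩ t).Nonempty ∧ (p.2 ∩ t).Nonempty))).image
        (fun M => M.subtype (· ∈ t)) := by
  classical
  simp only [sjComponents, Finset.image_union, Finset.image_image]
  rfl

lemma key_prop (G : LoopGraph V) (C : Finset (Finset V × Finset V))
    (hC : G.IsCover C) (t : Finset V) (M : Finset V)
    (hM : M ∈ sjComponents (C.filter (fun p => (p.1 ∩ t).Nonempty ∧ (p.2 ∩ t).Nonempty))) :
    (M ∩ t).Nonempty ∧ ∃ v ∈ t, ∀ x ∈ M, G.Adj x v := by
  classical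
  simp only [sjComponents, Finset.mem_union, Finset.mem_image, Finset.mem_filter] at hM
  rcases hM with ⟨p, ⟨hpC, hne1, hne2⟩, rfl⟩ | ⟨p, ⟨hpC, hne1, hne2⟩, rfl⟩
  · obtain ⟨b, hb⟩ := hne2
    simp only [Finset.mem_inter] at hb
    exact ⟨hne1, b, hb.2, fun x hx => (hC.2 x b).mpr ⟨p, hpC, Or.inl ⟨hx, hb.1⟩⟩⟩
  · obtain ⟨a, ha⟩ := hne1
    simp only [Finset.mem_inter] at ha
    exact ⟨hne2, a, ha.2, fun x hx => (hC.2 x a).mpr ⟨p, hpC, Or.inr ⟨hx, ha.1⟩⟩⟩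

end Restrict

/-- If `V(G)` is split into two induced parts `G₁ = G[s]`,
`G₂ = G[sᶜ]` with no `u₁, v₁ ∈ s`, `u₂, v₂ ∈ sᶜ` such that all pairs
`{uᵢ, vⱼ}` are edges, then `gap G ≤ gap G₁ + gap G₂`, equivalently
`stp G ≥ stp G₁ + stp G₂`. -/
theorem stmt_7 {V : Type*} [Fintype V] [DecidableEq V] (G : LoopGraph V)
    (s : Finset V)
    (h : ¬ ∃ u₁ v₁ u₂ v₂ : V, u₁ ∈ s ∧ v₁ ∈ s ∧ u₂ ∈ sᶜ ∧ v₂ ∈ sᶜ ∧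
      G.Adj u₁ v₁ ∧ G.Adj u₁ v₂ ∧ G.Adj u₂ v₁ ∧ G.Adj u₂ v₂) :
    G.gap ≤ (G.induce s).gap + (G.induce sᶜ).gap ∧
    (G.induce s).stp + (G.induce sᶜ).stp ≤ G.stp := by
  classical
  -- get an optimal cover of G
  have hSne : {n | ∃ C : Finset (Finset V × Finset V),
      G.IsCover C ∧ (sjComponents C).card = n}.Nonempty := by
    obtain ⟨C, hC⟩ := exists_cover_s7 G
    exact ⟨(sjComponents C).card, C, hC, rfl⟩
  obtain ⟨C, hC, hCcard⟩ := Nat.sInf_mem hSne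
  set F1 := C.filter (fun p => (p.1 ∩ s).Nonempty ∧ (p.2 ∩ s).Nonempty) with hF1
  set F2 := C.filter (fun p => (p.1 ∩ sᶜ).Nonempty ∧ (p.2 ∩ sᶜ).Nonempty) with hF2
  -- bounds on the two restricted covers
  have h1 : (G.induce s).stp ≤ (sjComponents F1).card := by
    refine le_trans (Nat.sInf_le ⟨_, cover_restrict G C hC s, rfl⟩) ?_
    rw [comps_restrict]
    exact Finset.card_image_le
  have h2 : (G.induce sᶜ).stp ≤ (sjComponents F2).card := by
    refine le_trans (Nat.sInf_le ⟨_, cover_restrict G C hC sᶜ, rfl⟩) ?_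
    rw [comps_restrict]
    exact Finset.card_image_le
  -- disjointness of the used component sets
  have hdisj : Disjoint (sjComponents F1) (sjComponents F2) := by
    rw [Finset.disjoint_left]
    intro M hM1 hM2
    obtain ⟨⟨u₁, hu₁⟩, v₁, hv₁s, hv₁⟩ := key_prop G C hC s M hM1
    obtain ⟨⟨u₂, hu₂⟩, v₂, hv₂c, hv₂⟩ := key_prop G C hC sᶜ M hM2
    simp only [Finset.mem_inter] at hu₁ hu₂
    exact h ⟨u₁, v₁, u₂, v₂, hu₁.2, hv₁s, hu₂.2, hv₂c,
      hv₁ u₁ hu₁.1, hv₂ u₁ hu₁.1, hv₁ u₂ hu₂.1, hv₂ u₂ hu₂.1⟩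
  have hsub : sjComponents F1 ∪ sjComponents F2 ⊆ sjComponents C := by
    apply Finset.union_subset <;>
      exact Finset.union_subset_union (Finset.image_subset_image (Finset.filter_subset _ _))
        (Finset.image_subset_image (Finset.filter_subset _ _))
  have hcount : (sjComponents F1).card + (sjComponents F2).card ≤ (sjComponents C).card := by
    rw [← Finset.card_union_of_disjoint hdisj]
    exact Finset.card_le_card hsub
  have hstp : (G.induce s).stp + (G.induce sᶜ).stp ≤ G.stp := by
    have hG : G.stp = (sjComponents C).card := hCcard.symm
    omega
  refine ⟨?_, hstp⟩
  have hc1 : Fintype.card {x // x ∈ s} = s.card := Fintype.card_coe s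
  have hc2 : Fintype.card {x // x ∈ sᶜ} = sᶜ.card := Fintype.card_coe sᶜ
  have hV : s.card + sᶜ.card = Fintype.card V := Finset.card_add_card_compl s
  simp only [gap, hc1, hc2]
  omega
end
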